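/- arXiv:1002.0094 — 9 statements merged into one kernel-verified Lean document; each statement's English description precedes it below -/
import Mathlib

section
/- For any finite collection of continuous almost periodic functions F_1, …, F_p on ℝ^p and any ε > 0, the set of common ε-almost periods of F_1, …, F_p that have integer coordinates (i.e., lie in ℤ^p) is relatively dense in ℝ^p. -/
/-!
Enlarge the family `F j` by the functions `x ↦ ‖(x k : ℝ/ℤ)‖`, the distance from the coordinate
`x k` to `ℤ`; these are almost periodic, every integer vector being a period. A continuous almost
periodic function is uniformly continuous and has, up to `δ`, only finitely many translates, so by
pigeonhole the common `δ`-almost periods of finitely many such functions are relatively dense. A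
common `δ`-almost period `σ` of the enlarged family has all coordinates within `δ` of integers;
rounding them moves `σ` by at most `√p δ`, and by uniform continuity the rounded vector is still a
common `ε`-almost period of the `F j`.
-/

open Metric Set MeasureTheory

/-- A set is relatively dense if some radius `R` works: every ball of radius `R` meets it. -/
def RelativelyDense {E : Type*} [PseudoMetricSpace E] (S : Set E) : Prop :=
  ∃ R : ℝ, 0 < R ∧ ∀ c : E, ∃ τ ∈ S, dist τ c < R

/-- Bohr almost periodicity: for every `ε > 0` the set of `ε`-almost periods is relatively dense. -/
def AlmostPeriodic {E : Type*} [SeminormedAddCommGroup E] (f : E → ℝ) : Prop :=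
  ∀ ε : ℝ, 0 < ε → RelativelyDense {τ : E | ∀ x : E, |f (x + τ) - f x| < ε}

theorem RelativelyDense.of_forall_exists_dist_le {E : Type*} [PseudoMetricSpace E]
    {S T : Set E} (hS : RelativelyDense S) {r : ℝ} (hr : 0 ≤ r)
    (h : ∀ σ ∈ S, ∃ τ ∈ T, dist τ σ ≤ r) : RelativelyDense T := by
  obtain ⟨R, hR, hSR⟩ := hS
  refine ⟨R + r, by positivity, fun c => ?_⟩
  obtain ⟨σ, hσS, hσc⟩ := hSR c
  obtain ⟨τ, hτT, hτσ⟩ := h σ hσS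
  exact ⟨τ, hτT, (dist_triangle τ σ c).trans_lt (by linarith)⟩

/-- Pigeonhole: two translates with the same nearby net point for every `H i` are `δ`-close,
so one representative per choice of net points suffices. -/
theorem exists_finite_common_net {E ι : Type*} [Add E] [Finite ι] (H : ι → E → ℝ)
    (hnet : ∀ i, ∀ δ > 0, ∃ A : Set E, A.Finite ∧
      ∀ t, ∃ a ∈ A, ∀ x, |H i (x + t) - H i (x + a)| < δ)
    {δ : ℝ} (hδ : 0 < δ) :
    ∃ A : Set E, A.Finite ∧ ∀ t, ∃ a ∈ A, ∀ i x, |H i (x + t) - H i (x + a)| < δ := by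
  choose A hA hnear using fun i => hnet i (δ / 2) (by positivity)
  choose c hcA hc using fun t i => hnear i t
  have : Finite (range c) :=
    (Set.Finite.pi' fun i => hA i).subset (by rintro _ ⟨t, rfl⟩ i; exact hcA t i) |>.to_subtype
  refine ⟨range fun v : range c => v.2.choose, finite_range _, fun t => ?_⟩
  set a := (⟨c t, t, rfl⟩ : range c).2.choose
  have hca : c a = c t := (⟨c t, t, rfl⟩ : range c).2.choose_spec
  refine ⟨a, mem_range_self (⟨c t, t, rfl⟩ : range c), fun i x => ?_⟩
  have h₂ := hc a i x
  rw [hca, abs_sub_comm] at h₂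
  calc |H i (x + t) - H i (x + a)|
        ≤ |H i (x + t) - H i (x + c t i)| + |H i (x + c t i) - H i (x + a)| := abs_sub_le ..
    _ < δ / 2 + δ / 2 := add_lt_add (hc t i x) h₂
    _ = δ := add_halves δ

section AlmostPeriodic

variable {E : Type*} [SeminormedAddCommGroup E] [ProperSpace E] {f : E → ℝ}

theorem AlmostPeriodic.uniformContinuous (hap : AlmostPeriodic f) (hc : Continuous f) :
    UniformContinuous f := by
  refine Metric.uniformContinuous_iff.2 fun ε hε => ?_
  obtain ⟨R, -, hR⟩ := hap (ε / 3) (by positivity)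
  obtain ⟨η, hη, hK⟩ := Metric.uniformContinuousOn_iff.1
    ((isCompact_closedBall (0 : E) (R + 1)).uniformContinuousOn_of_continuous hc.continuousOn)
    (ε / 3) (by positivity)
  refine ⟨min η 1, by positivity, fun {u v} huv => ?_⟩
  obtain ⟨τ, hτ, hτu⟩ := hR u
  have hu : u - τ ∈ closedBall (0 : E) (R + 1) := by
    rw [mem_closedBall_zero_iff, ← dist_eq_norm, dist_comm]
    linarith
  have hv : v - τ ∈ closedBall (0 : E) (R + 1) := by
    rw [mem_closedBall_zero_iff, ← dist_eq_norm]
    linarith [dist_triangle v u τ, dist_comm u τ, dist_comm u v, min_le_right η 1]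
  have hmid := hK (u - τ) hu (v - τ) hv
    (by rw [dist_sub_right]; exact huv.trans_le (min_le_left η 1))
  have hτu' := hτ (u - τ)
  have hτv' := hτ (v - τ)
  rw [sub_add_cancel, ← Real.dist_eq] at hτu' hτv'
  calc dist (f u) (f v) ≤ dist (f u) (f (u - τ)) + dist (f (u - τ)) (f (v - τ)) +
        dist (f (v - τ)) (f v) := dist_triangle4 ..
    _ < ε / 3 + ε / 3 + ε / 3 := by
        gcongr
        rwa [dist_comm]
    _ = ε := by ring

theorem AlmostPeriodic.exists_finite_net (hap : AlmostPeriodic f) (hc : Continuous f)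
    {δ : ℝ} (hδ : 0 < δ) :
    ∃ A : Set E, A.Finite ∧ ∀ t, ∃ a ∈ A, ∀ x, |f (x + t) - f (x + a)| < δ := by
  obtain ⟨η, hη, hf⟩ := Metric.uniformContinuous_iff.1 (hap.uniformContinuous hc) (δ / 2)
    (by positivity)
  obtain ⟨R, -, hR⟩ := hap (δ / 2) (by positivity)
  obtain ⟨A, hA, hcover⟩ := totallyBounded_iff.1
    (isCompact_closedBall (0 : E) R).totallyBounded η hη
  refine ⟨A, hA, fun t => ?_⟩
  obtain ⟨τ, hτ, hτt⟩ := hR t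
  have ht : t - τ ∈ closedBall (0 : E) R := by
    rw [mem_closedBall_zero_iff, ← dist_eq_norm, dist_comm]
    exact hτt.le
  obtain ⟨a, haA, hta⟩ := mem_iUnion₂.1 (hcover ht)
  refine ⟨a, haA, fun x => ?_⟩
  have h₁ := hτ (x + (t - τ))
  rw [show x + (t - τ) + τ = x + t by abel] at h₁
  have h₂ := hf (show dist (x + (t - τ)) (x + a) < η by rwa [dist_add_left])
  rw [Real.dist_eq] at h₂
  calc |f (x + t) - f (x + a)|
        ≤ |f (x + t) - f (x + (t - τ))| + |f (x + (t - τ)) - f (x + a)| := abs_sub_le ..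
    _ < δ / 2 + δ / 2 := add_lt_add h₁ h₂
    _ = δ := add_halves δ

theorem relativelyDense_common_almostPeriods {ι : Type*} [Finite ι] (H : ι → E → ℝ)
    (hc : ∀ i, Continuous (H i)) (hap : ∀ i, AlmostPeriodic (H i)) {δ : ℝ} (hδ : 0 < δ) :
    RelativelyDense {τ | ∀ i x, |H i (x + τ) - H i x| < δ} := by
  obtain ⟨A, hA, hnet⟩ := exists_finite_common_net H
    (fun i _ hδ => (hap i).exists_finite_net (hc i) hδ) hδ
  obtain ⟨M, hM⟩ := isBounded_iff_forall_norm_le.1 hA.isBounded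
  refine ⟨|M| + 1, by positivity, fun c => ?_⟩
  obtain ⟨a, haA, hca⟩ := hnet c
  refine ⟨c - a, fun i x => ?_, ?_⟩
  · simpa [add_sub_assoc', sub_add_cancel, add_sub_right_comm] using hca i (x - a)
  · rw [dist_eq_norm, sub_sub_cancel_left, norm_neg]
    linarith [hM a haA, le_abs_self M]

end AlmostPeriodic

section IntegerPoints

variable {ι : Type*} [Fintype ι]

theorem EuclideanSpace.dist_le_sqrt_card_mul {x y : EuclideanSpace ℝ ι} {r : ℝ} (hr : 0 ≤ r)
    (h : ∀ i, dist (x i) (y i) ≤ r) : dist x y ≤ √(Fintype.card ι) * r := by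
  calc dist x y = √(∑ i, dist (x i) (y i) ^ 2) := EuclideanSpace.dist_eq x y
    _ ≤ √(∑ _ : ι, r ^ 2) := by gcongr with i; exact h i
    _ = √(Fintype.card ι) * r := by
        rw [Finset.sum_const, Finset.card_univ, nsmul_eq_mul, Real.sqrt_mul (by positivity),
          Real.sqrt_sq hr]

theorem exists_intCoords_dist_le (σ : EuclideanSpace ℝ ι) {r : ℝ} (hr : 0 ≤ r)
    (h : ∀ k, |σ k - round (σ k)| ≤ r) :
    ∃ τ : EuclideanSpace ℝ ι, (∀ k, ∃ z : ℤ, τ k = z) ∧ dist τ σ ≤ √(Fintype.card ι) * r :=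
  ⟨WithLp.toLp 2 fun k => (round (σ k) : ℝ), fun k => ⟨round (σ k), rfl⟩,
    EuclideanSpace.dist_le_sqrt_card_mul hr fun k => by
      rw [Real.dist_eq, abs_sub_comm]; exact h k⟩

theorem relativelyDense_intCoords :
    RelativelyDense {τ : EuclideanSpace ℝ ι | ∀ k, ∃ z : ℤ, τ k = z} := by
  refine ⟨√(Fintype.card ι) * (1 / 2) + 1, by positivity, fun c => ?_⟩
  obtain ⟨τ, hτ, hτc⟩ := exists_intCoords_dist_le c (by norm_num) fun k => abs_sub_round (c k)
  exact ⟨τ, hτ, by linarith⟩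

theorem almostPeriodic_norm_coe_unitAddCircle (k : ι) :
    AlmostPeriodic fun x : EuclideanSpace ℝ ι => ‖(x k : UnitAddCircle)‖ := by
  refine fun ε hε => relativelyDense_intCoords.of_forall_exists_dist_le le_rfl
    fun τ hτ => ⟨τ, fun x => ?_, (dist_self τ).le⟩
  obtain ⟨z, hz⟩ := hτ k
  simpa [hz] using hε

end IntegerPoints

/-- common integer-coordinate ε-almost periods of finitely many
continuous almost periodic functions form a relatively dense set. -/
theorem statement2 {p : ℕ} (F : Fin p → EuclideanSpace ℝ (Fin p) → ℝ)
    (hc : ∀ j, Continuous (F j)) (hap : ∀ j, AlmostPeriodic (F j))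
    (ε : ℝ) (hε : 0 < ε) :
    RelativelyDense {τ : EuclideanSpace ℝ (Fin p) |
      (∀ j : Fin p, ∃ z : ℤ, τ j = (z : ℝ)) ∧
      ∀ j : Fin p, ∀ x, |F j (x + τ) - F j x| < ε} := by
  obtain ⟨η, hη, hF⟩ := Metric.uniformContinuous_iff.1
    (uniformContinuous_pi.2 fun j => (hap j).uniformContinuous (hc j)) (ε / 2) (half_pos hε)
  set δ := min (ε / 2) (η / (√p + 1))
  have hδ : 0 < δ := by positivity
  have hδη : √p * δ < η := by
    calc √p * δ ≤ √p * (η / (√p + 1)) := by gcongr; exact min_le_right _ _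
      _ < η := by
        rw [mul_div_assoc', div_lt_iff₀ (by positivity)]
        nlinarith
  let G : Fin p ⊕ Fin p → EuclideanSpace ℝ (Fin p) → ℝ :=
    Sum.elim F fun k x => ‖(x k : UnitAddCircle)‖
  have hG : RelativelyDense {σ | ∀ i x, |G i (x + σ) - G i x| < δ} :=
    relativelyDense_common_almostPeriods G
      (Sum.forall.2 ⟨hc, fun k => by simp only [G, Sum.elim_inr]; fun_prop⟩)
      (Sum.forall.2 ⟨hap, almostPeriodic_norm_coe_unitAddCircle⟩) hδ
  refine hG.of_forall_exists_dist_le hη.le fun σ hσ => ?_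
  obtain ⟨τ, hτ, hτσ⟩ := exists_intCoords_dist_le σ hδ.le fun k => by
    simpa [G, UnitAddCircle.norm_eq] using (hσ (.inr k) 0).le
  rw [Fintype.card_fin] at hτσ
  refine ⟨τ, ⟨hτ, fun j x => ?_⟩, hτσ.trans hδη.le⟩
  have h₁ := (dist_le_pi_dist _ _ j).trans_lt (hF (a := x + τ) (b := x + σ)
    (by rw [dist_add_left]; exact hτσ.trans_lt hδη))
  rw [Real.dist_eq] at h₁
  calc |F j (x + τ) - F j x| ≤ |F j (x + τ) - F j (x + σ)| + |F j (x + σ) - F j x| :=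
        abs_sub_le ..
    _ < ε / 2 + ε / 2 := add_lt_add h₁ ((hσ (.inl j) x).trans_le (min_le_left _ _))
    _ = ε := add_halves ε
end

section
/- Let F(x) = (1/5)(sin x_1, …, sin x_p) and A = {k + F(k) : k ∈ ℤ^p}. Then A has no nonzero period: there is no τ ∈ ℝ^p \ {0} such that A + τ = A. -/
/-!
Since `0 ∈ A`, a period `τ` lies in `A`, and then so does `2τ`. Coordinatewise,
`τⱼ = m + sin m / 5` and `2τⱼ = c + sin c / 5` with integers `m`, `c`; the three sine terms
contribute less than `1` in absolute value, so `c = 2m`. Hence `2 sin m = sin 2m = 2 sin m cos m`,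
which forces `sin m = 0`, and `m = 0` because `π` is irrational.
-/

open Metric Set MeasureTheory

open Real

lemma Int.eq_zero_of_sin_eq_zero {n : ℤ} (h : sin n = 0) : n = 0 := by
  obtain ⟨m, hm⟩ := sin_eq_zero_iff.mp h
  obtain rfl : m = 0 := by
    by_contra hm0
    exact (irrational_pi.intCast_mul hm0).ne_int n hm
  exact_mod_cast (by simpa using hm.symm : (n : ℝ) = 0)

lemma Real.sin_eq_zero_of_two_mul_sin_eq_sin_two_mul {x : ℝ} (h : 2 * sin x = sin (2 * x)) :
    sin x = 0 := by
  rw [sin_two_mul] at h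
  have hcos : sin x * (1 - cos x) = 0 := by linarith
  rcases mul_eq_zero.mp hcos with hs | hc
  · exact hs
  · nlinarith [sin_sq_add_cos_sq x]

noncomputable def sinPerturb (n : ℤ) : ℝ := n + (1 / 5) * sin n

lemma eq_add_of_sinPerturb_add_eq {a b c : ℤ} (h : sinPerturb a + sinPerturb b = sinPerturb c) :
    c = a + b := by
  unfold sinPerturb at h
  have hlt : |((c - a - b : ℤ) : ℝ)| < 1 := by
    rw [abs_lt]
    push_cast
    constructor <;> linarith [neg_one_le_sin a, sin_le_one a, neg_one_le_sin b, sin_le_one b,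
      neg_one_le_sin c, sin_le_one c]
  have := abs_lt.mp (show |c - a - b| < 1 by exact_mod_cast hlt)
  omega

lemma sinPerturb_eq_zero_of_add_self_eq {m c : ℤ}
    (h : sinPerturb m + sinPerturb m = sinPerturb c) : sinPerturb m = 0 := by
  obtain rfl := eq_add_of_sinPerturb_add_eq h
  have hm0 : m = 0 := by
    apply Int.eq_zero_of_sin_eq_zero
    apply Real.sin_eq_zero_of_two_mul_sin_eq_sin_two_mul
    unfold sinPerturb at h
    push_cast at h
    rw [two_mul (m : ℝ)]
    linarith
  simp [hm0, sinPerturb]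

/-- the almost periodic set `A = {k + (1/5)(sin k₁, …, sin k_p) : k ∈ ℤ^p}`
has no nonzero period. -/
theorem statement6 {p : ℕ} (τ : EuclideanSpace ℝ (Fin p)) (hτ : τ ≠ 0) :
    ¬ ((fun a => a + τ) '' {y : EuclideanSpace ℝ (Fin p) |
          ∃ k : Fin p → ℤ, ∀ j : Fin p, y j = (k j : ℝ) + (1 / 5) * Real.sin (k j)} =
        {y : EuclideanSpace ℝ (Fin p) |
          ∃ k : Fin p → ℤ, ∀ j : Fin p, y j = (k j : ℝ) + (1 / 5) * Real.sin (k j)}) := by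
  let A := {y : EuclideanSpace ℝ (Fin p) | ∃ k : Fin p → ℤ, ∀ j, y j = sinPerturb (k j)}
  change ¬ (fun a => a + τ) '' A = A
  intro h
  have hshift : ∀ y ∈ A, y + τ ∈ A := fun y hy => h ▸ ⟨y, hy, rfl⟩
  obtain ⟨m, hm⟩ : τ ∈ A := by simpa using hshift 0 ⟨0, by simp [sinPerturb]⟩
  obtain ⟨c, hc⟩ := hshift τ ⟨m, hm⟩
  refine hτ (PiLp.ext fun j => ?_)
  rw [hm j, sinPerturb_eq_zero_of_add_self_eq (c := c j) (by rw [← hm j, ← hc j]; rfl)]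
  rfl
end

section
/- For any m ∈ ℤ and β ∈ ℝ with |β| < 1/2 and (m, β) ≠ (0, 0), the identity sin(k + m) = β + sin(k) cannot hold for all k ∈ ℤ. -/
open Metric Set MeasureTheory

/-- for `m ∈ ℤ`, `β ∈ ℝ` with `|β| < 1/2`, `(m, β) ≠ (0, 0)`,
the identity `sin(k + m) = β + sin k` cannot hold for all `k ∈ ℤ`. -/
theorem statement7 (m : ℤ) (β : ℝ) (hβ : |β| < 1 / 2) (h : ¬(m = 0 ∧ β = 0)) :
    ¬ ∀ k : ℤ, Real.sin ((k : ℝ) + (m : ℝ)) = β + Real.sin (k : ℝ) := by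
  intro hall
  have h0 := hall 0
  have h1 := hall 1
  have hm1 := hall (-1)
  push_cast at h0 h1 hm1
  rw [zero_add, Real.sin_zero, add_zero] at h0
  -- sum-to-product: sin(1+m) + sin(-1+m) = 2 sin m cos 1
  have hsum : Real.sin (1 + (m:ℝ)) + Real.sin (-1 + (m:ℝ)) = 2 * Real.sin m * Real.cos 1 := by
    have := Real.sin_add (m:ℝ) 1
    have h2 := Real.sin_sub (m:ℝ) 1
    have e1 : (1 + (m:ℝ)) = (m:ℝ) + 1 := by ring
    have e2 : (-1 + (m:ℝ)) = (m:ℝ) - 1 := by ring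
    rw [e1, e2, this, h2]; ring
  rw [h1, hm1, Real.sin_neg, ← h0] at hsum
  have hc : Real.cos 1 ≤ 2/3 := Real.cos_one_le.trans (by norm_num)
  have hs0 : Real.sin m = 0 := by
    have key : Real.sin m * (1 - Real.cos 1) = 0 := by linear_combination hsum / 2
    rcases mul_eq_zero.mp key with h' | h'
    · exact h'
    · linarith
  have hβ0 : β = 0 := by rw [← h0, hs0]
  have hm : m ≠ 0 := fun hm => h ⟨hm, hβ0⟩
  rw [Real.sin_eq_zero_iff] at hs0
  obtain ⟨n, hn⟩ := hs0
  have hn0 : n ≠ 0 := by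
    rintro rfl
    simp at hn
    exact hm (by exact_mod_cast hn.symm)
  exact irrational_pi ⟨(m : ℚ) / n, by push_cast; field_simp; linarith [hn]⟩
end

section
/- Let A be a multiset in ℝ (a nondecreasing doubly infinite sequence (a_k)_{k∈ℤ}) such that for every ε > 0 its set of ε-almost periods is relatively dense in ℝ, and suppose card(A ∩ (−L−1, L+1)) = M where every interval of length L > 2 contains a 1-almost period. Then card(A ∩ I) ≤ M for every interval I of length L. -/
/-!
A `1`-almost period `κ ∈ [-x - L, -x]` gives a bijection `σ` of `ℤ` moving every point by
`κ ± 1`, so `σ` maps the points of `A` in `[x, x + L]` injectively to points of `A` in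
`(-L - 1, L + 1)`. Counting needs that the latter set is finite: otherwise, by monotonicity, `A`
would lie entirely below `L + 1` (or above `-L - 1`), and a long almost period would push one of
its points out of that half-line.
-/

open Metric Set MeasureTheory

/-- `τ` is an `ε`-almost period of the multiset `(a_k)_{k ∈ ℤ}` in the bijective sense. -/
def IsAlmostPeriodOf (a : ℤ → ℝ) (ε τ : ℝ) : Prop :=
  ∃ σ : ℤ ≃ ℤ, ∀ k : ℤ, |a k + τ - a (σ k)| < ε

theorem IsAlmostPeriodOf.exists_equiv_mem_Ioo {a : ℤ → ℝ} {ε τ : ℝ}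
    (h : IsAlmostPeriodOf a ε τ) :
    ∃ σ : ℤ ≃ ℤ, ∀ k : ℤ, a (σ k) ∈ Ioo (a k + τ - ε) (a k + τ + ε) := by
  obtain ⟨σ, hσ⟩ := h
  refine ⟨σ, fun k => ?_⟩
  have := abs_lt.mp (hσ k)
  constructor <;> linarith

theorem IsAlmostPeriodOf.exists_mapsTo {a : ℤ → ℝ} {ε τ : ℝ} (h : IsAlmostPeriodOf a ε τ)
    {l u l' u' : ℝ} (hl : l' ≤ l + τ - ε) (hu : u + τ + ε ≤ u') :
    ∃ σ : ℤ ≃ ℤ, MapsTo σ {k | a k ∈ Icc l u} {k | a k ∈ Ioo l' u'} := by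
  obtain ⟨σ, hσ⟩ := h.exists_equiv_mem_Ioo
  refine ⟨σ, fun k hk => ?_⟩
  obtain ⟨hlk, hku⟩ := hk
  obtain ⟨hσl, hσu⟩ := hσ k
  constructor <;> linarith

theorem Monotone.forall_lt_or_forall_gt_of_infinite_preimage_Ioo {α : Type*} [LinearOrder α]
    {a : ℤ → α} (mono : Monotone a) {l u : α} (h : {k | a k ∈ Ioo l u}.Infinite) :
    (∀ j, a j < u) ∨ (∀ j, l < a j) := by
  by_contra! ⟨⟨j, hj⟩, i, hi⟩
  refine h ((finite_Icc i j).subset fun k ⟨hlk, hku⟩ => ⟨?_, ?_⟩)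
  · by_contra! hki
    exact (hlk.trans_le (mono hki.le)).not_ge hi
  · by_contra! hjk
    exact (hku.trans_le' (mono hjk.le)).not_ge hj

theorem finite_preimage_Ioo_of_almostPeriod_mem_Icc {a : ℤ → ℝ} (mono : Monotone a) {ε L : ℝ}
    (hper : ∀ x : ℝ, ∃ κ ∈ Icc x (x + L), IsAlmostPeriodOf a ε κ) (l u : ℝ) :
    {k | a k ∈ Ioo l u}.Finite := by
  by_contra hinf
  obtain ⟨k, hlk, hku⟩ := (not_finite.mp hinf).nonempty
  rcases mono.forall_lt_or_forall_gt_of_infinite_preimage_Ioo hinf with hbelow | habove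
  · obtain ⟨κ, ⟨hκ, -⟩, hap⟩ := hper (u - l + ε)
    obtain ⟨σ, hσ⟩ := hap.exists_equiv_mem_Ioo
    linarith [(hσ k).1, hbelow (σ k)]
  · obtain ⟨κ, ⟨-, hκ⟩, hap⟩ := hper (l - u - ε - L)
    obtain ⟨σ, hσ⟩ := hap.exists_equiv_mem_Ioo
    linarith [(hσ k).2, habove (σ k)]

theorem statement8_general (a : ℤ → ℝ) (mono : Monotone a)
    (L : ℝ)
    (hper : ∀ x : ℝ, ∃ κ ∈ Set.Icc x (x + L), IsAlmostPeriodOf a 1 κ)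
    (M : ℕ) (hM : M = Nat.card {k : ℤ | a k ∈ Set.Ioo (-L - 1) (L + 1)}) :
    ∀ x : ℝ, Nat.card {k : ℤ | a k ∈ Set.Icc x (x + L)} ≤ M := by
  intro x
  obtain ⟨κ, ⟨hxκ, hκx⟩, hap⟩ := hper (-x - L)
  obtain ⟨σ, hσ⟩ := hap.exists_mapsTo (l := x) (u := x + L) (l' := -L - 1) (u' := L + 1)
    (by linarith) (by linarith)
  rw [hM, Nat.card_coe_set_eq, Nat.card_coe_set_eq]
  exact ncard_le_ncard_of_injOn σ hσ σ.injective.injOn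
    (finite_preimage_Ioo_of_almostPeriod_mem_Icc mono hper _ _)

/-- if every interval of length `L > 2` contains a `1`-almost period and
`M = card(A ∩ (−L−1, L+1))`, then `card(A ∩ I) ≤ M` for every interval `I` of length `L`. -/
theorem statement8 (a : ℤ → ℝ) (mono : Monotone a)
    (hap : ∀ ε : ℝ, 0 < ε → RelativelyDense {τ : ℝ | IsAlmostPeriodOf a ε τ})
    (L : ℝ) (hL : 2 < L)
    (hper : ∀ x : ℝ, ∃ κ ∈ Set.Icc x (x + L), IsAlmostPeriodOf a 1 κ)
    (M : ℕ) (hM : M = Nat.card {k : ℤ | a k ∈ Set.Ioo (-L - 1) (L + 1)}) :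
    ∀ x : ℝ, Nat.card {k : ℤ | a k ∈ Set.Icc x (x + L)} ≤ M :=
  statement8_general a mono L hper M hM
end

section
/- Let A = (a_k)_{k∈ℤ} be a nondecreasing almost periodic multiple discrete set in ℝ with density 1. Then there exists M < ∞ such that |card(A ∩ (x, x+h]) − h| ≤ 4M for all x ∈ ℝ and all h > 0. -/
open Metric Set MeasureTheory

/-!
A `1`-almost period `τ` maps the points of a window `(x, y]` injectively into
`(x + τ - 1, y + τ + 1]`. As the almost periods are `R`-dense, any window of length `h` holds at
most as many points as any other window of length `h + C`, with `C = 2R + 2`. Tiling a window of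
length `n (h + C)` by `n` such windows and letting `n → ∞`, density `1` gives `count ≤ h + C`;
in the same way windows of length `h - C` give `count ≥ h - C`.
-/

open Filter Topology

def HasUniformDensity (a : ℤ → ℝ) (D : ℝ) : Prop :=
  ∀ ε : ℝ, 0 < ε → ∃ R₀ : ℝ, 0 < R₀ ∧ ∀ R : ℝ, R₀ ≤ R → ∀ x : ℝ,
    |(Nat.card {k : ℤ | a k ∈ Set.Ioo (x - R) (x + R)} : ℝ) / (2 * R) - D| < ε

section Counting

variable {a : ℤ → ℝ}

theorem card_preimage_Ioc_add_card_preimage_Ioc (hfin : ∀ u v, (a ⁻¹' Ioc u v).Finite)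
    {x y z : ℝ} (hxy : x ≤ y) (hyz : y ≤ z) :
    Nat.card (a ⁻¹' Ioc x y) + Nat.card (a ⁻¹' Ioc y z) = Nat.card (a ⁻¹' Ioc x z) := by
  rw [← Ioc_union_Ioc_eq_Ioc hxy hyz, preimage_union, Nat.card_coe_set_eq, Nat.card_coe_set_eq,
    Nat.card_coe_set_eq, ncard_union_eq ((Ioc_disjoint_Ioc_of_le le_rfl).preimage a)
    (hfin x y) (hfin y z)]

theorem card_preimage_Ioc_eq_sum (hfin : ∀ u v, (a ⁻¹' Ioc u v).Finite) {H : ℝ} (hH : 0 ≤ H)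
    (x : ℝ) (n : ℕ) :
    Nat.card (a ⁻¹' Ioc x (x + n * H)) =
      ∑ j ∈ Finset.range n, Nat.card (a ⁻¹' Ioc (x + j * H) (x + j * H + H)) := by
  induction n with
  | zero => simp
  | succ n ih =>
    have hstep : x + ((n + 1 : ℕ) : ℝ) * H = x + n * H + H := by push_cast; ring
    rw [Finset.sum_range_succ, ← ih, hstep, card_preimage_Ioc_add_card_preimage_Ioc hfin
      (le_add_of_nonneg_right (by positivity)) (le_add_of_nonneg_right hH)]

theorem IsAlmostPeriodOf.card_preimage_Ioc_le {ε τ : ℝ} (hτ : IsAlmostPeriodOf a ε τ) {x y : ℝ}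
    (hfin : (a ⁻¹' Ioc (x + τ - ε) (y + τ + ε)).Finite) :
    Nat.card (a ⁻¹' Ioc x y) ≤ Nat.card (a ⁻¹' Ioc (x + τ - ε) (y + τ + ε)) := by
  obtain ⟨σ, hσ⟩ := hτ
  rw [Nat.card_coe_set_eq, Nat.card_coe_set_eq]
  refine ncard_le_ncard_of_injOn σ (fun k hk => ?_) σ.injective.injOn hfin
  obtain ⟨hlo, hhi⟩ := abs_lt.1 (hσ k)
  exact ⟨by linarith [hk.1], by linarith [hk.2]⟩

theorem exists_forall_card_preimage_Ioc_le {ε : ℝ} (hε : 0 < ε)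
    (hap : RelativelyDense {τ | IsAlmostPeriodOf a ε τ})
    (hfin : ∀ u v, (a ⁻¹' Ioc u v).Finite) :
    ∃ C, 0 ≤ C ∧ ∀ x y h,
      Nat.card (a ⁻¹' Ioc x (x + h)) ≤ Nat.card (a ⁻¹' Ioc y (y + (h + C))) := by
  obtain ⟨R, hR, hτ⟩ := hap
  refine ⟨2 * (R + ε), by positivity, fun x y h => ?_⟩
  obtain ⟨τ, hτap, hτd⟩ := hτ (y - x + R + ε)
  obtain ⟨hlo, hhi⟩ := abs_lt.1 (Real.dist_eq τ _ ▸ hτd)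
  refine (hτap.card_preimage_Ioc_le (hfin _ _)).trans
    (Nat.card_mono (hfin _ _) (preimage_mono (Ioc_subset_Ioc ?_ ?_))) <;> linarith

end Counting

namespace HasUniformDensity

variable {a : ℤ → ℝ} {D : ℝ} (hdens : HasUniformDensity a D)
include hdens

theorem tendsto_card_preimage_Ioo (g : ℝ → ℝ) :
    Tendsto (fun R => (Nat.card (a ⁻¹' Ioo (g R - R) (g R + R)) : ℝ) / (2 * R)) atTop (𝓝 D) :=
  Metric.tendsto_atTop.2 fun ε hε =>
    let ⟨R₀, _, hR₀⟩ := hdens ε hε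
    ⟨R₀, fun R hR => by rw [Real.dist_eq]; exact hR₀ R hR (g R)⟩

theorem finite_preimage_Ioo (hD : D ≠ 0) (u v : ℝ) : (a ⁻¹' Ioo u v).Finite := by
  obtain ⟨R, hcard, hR⟩ := (((hdens.tendsto_card_preimage_Ioo fun _ => 0).eventually_ne hD).and
    (eventually_ge_atTop (max |u| |v|))).exists
  have hne : Nat.card (a ⁻¹' Ioo (0 - R) (0 + R)) ≠ 0 := fun h0 =>
    hcard (by rw [h0, Nat.cast_zero, zero_div])
  refine (finite_coe_iff.1 (Nat.finite_of_card_ne_zero hne)).subset ?_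
  refine preimage_mono (Ioo_subset_Ioo ?_ ?_) <;>
    linarith [neg_abs_le u, le_abs_self v, le_max_left |u| |v|, le_max_right |u| |v|]

theorem finite_preimage_Ioc (hD : D ≠ 0) (u v : ℝ) : (a ⁻¹' Ioc u v).Finite :=
  (hdens.finite_preimage_Ioo hD u (v + 1)).subset
    (preimage_mono (Ioc_subset_Ioo_right (lt_add_one v)))

theorem tendsto_card_preimage_Ioc_div (hD : D ≠ 0) (x : ℝ) :
    Tendsto (fun L => (Nat.card (a ⁻¹' Ioc x (x + L)) : ℝ) / L) atTop (𝓝 D) := by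
  have hhalf : Tendsto (fun L : ℝ => L / 2) atTop atTop := tendsto_id.atTop_div_const two_pos
  have hlow : Tendsto (fun L => (Nat.card (a ⁻¹' Ioo x (x + L)) : ℝ) / L) atTop (𝓝 D) := by
    refine ((hdens.tendsto_card_preimage_Ioo fun R => x + R).comp hhalf).congr fun L => ?_
    simp only [Function.comp_apply]
    ring_nf
  have hupp : Tendsto (fun L => (Nat.card (a ⁻¹' Ioo (x - 1) (x + L + 1)) : ℝ) / L)
      atTop (𝓝 D) := by
    have hcorr : Tendsto (fun L : ℝ => 1 + 2 * L⁻¹) atTop (𝓝 1) := by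
      simpa using tendsto_const_nhds.add (tendsto_inv_atTop_zero.const_mul (2 : ℝ))
    have := ((hdens.tendsto_card_preimage_Ioo fun R => x + R - 1).comp
      (tendsto_atTop_add_const_right _ 1 hhalf)).mul hcorr
    rw [mul_one] at this
    refine this.congr' ((eventually_gt_atTop 0).mono fun L hL => ?_)
    simp only [Function.comp_apply]
    field_simp
    ring_nf
  refine tendsto_of_tendsto_of_tendsto_of_le_of_le' hlow hupp ?_ ?_ <;>
    filter_upwards [eventually_ge_atTop 0] with L hL <;>
    refine div_le_div_of_nonneg_right (Nat.cast_le.2 (Nat.card_mono ?_ (preimage_mono ?_))) hL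
  · exact hdens.finite_preimage_Ioc hD _ _
  · exact Ioo_subset_Ioc_self
  · exact hdens.finite_preimage_Ioo hD _ _
  · exact Ioc_subset_Ioo (by linarith) (by linarith)

theorem le_mul_of_forall_le_card_preimage_Ioc (hD : D ≠ 0) {c H : ℝ} (hH : 0 < H)
    (hc : ∀ y, c ≤ Nat.card (a ⁻¹' Ioc y (y + H))) : c ≤ D * H := by
  have hlim := (hdens.tendsto_card_preimage_Ioc_div hD 0).comp
    (tendsto_natCast_atTop_atTop.atTop_mul_const hH)
  have hbound : ∀ᶠ n : ℕ in atTop,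
      c / H ≤ (Nat.card (a ⁻¹' Ioc 0 (0 + n * H)) : ℝ) / (n * H) := by
    filter_upwards [eventually_gt_atTop 0] with n hn
    have hsum : n * c ≤ (Nat.card (a ⁻¹' Ioc 0 (0 + n * H)) : ℝ) := by
      rw [card_preimage_Ioc_eq_sum (hdens.finite_preimage_Ioc hD) hH.le, Nat.cast_sum]
      simpa using Finset.card_nsmul_le_sum (Finset.range n) _ c fun j _ => hc _
    rw [div_le_div_iff₀ hH (by positivity)]
    nlinarith
  exact (div_le_iff₀ hH).1 (ge_of_tendsto hlim hbound)

theorem mul_le_of_forall_card_preimage_Ioc_le (hD : D ≠ 0) {c H : ℝ} (hH : 0 < H)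
    (hc : ∀ y, Nat.card (a ⁻¹' Ioc y (y + H)) ≤ c) : D * H ≤ c := by
  have hlim := (hdens.tendsto_card_preimage_Ioc_div hD 0).comp
    (tendsto_natCast_atTop_atTop.atTop_mul_const hH)
  have hbound : ∀ᶠ n : ℕ in atTop,
      (Nat.card (a ⁻¹' Ioc 0 (0 + n * H)) : ℝ) / (n * H) ≤ c / H := by
    filter_upwards [eventually_gt_atTop 0] with n hn
    have hsum : (Nat.card (a ⁻¹' Ioc 0 (0 + n * H)) : ℝ) ≤ n * c := by
      rw [card_preimage_Ioc_eq_sum (hdens.finite_preimage_Ioc hD) hH.le, Nat.cast_sum]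
      simpa using Finset.sum_le_card_nsmul (Finset.range n) _ c fun j _ => hc _
    rw [div_le_div_iff₀ (by positivity) hH]
    nlinarith
  exact (le_div_iff₀ hH).1 (le_of_tendsto hlim hbound)

end HasUniformDensity

theorem statement10_general (a : ℤ → ℝ)
    (hap : ∀ ε : ℝ, 0 < ε → RelativelyDense {τ : ℝ | IsAlmostPeriodOf a ε τ})
    (hD : ∀ ε : ℝ, 0 < ε → ∃ R₀ : ℝ, 0 < R₀ ∧ ∀ R : ℝ, R₀ ≤ R → ∀ x : ℝ,
      |(Nat.card {k : ℤ | a k ∈ Set.Ioo (x - R) (x + R)} : ℝ) / (2 * R) - 1| < ε) :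
    ∃ M : ℝ, ∀ x : ℝ, ∀ h : ℝ, 0 < h →
      |(Nat.card {k : ℤ | a k ∈ Set.Ioc x (x + h)} : ℝ) - h| ≤ 4 * M := by
  have hdens : HasUniformDensity a 1 := hD
  obtain ⟨C, hC, hcmp⟩ := exists_forall_card_preimage_Ioc_le one_pos (hap 1 one_pos)
    (hdens.finite_preimage_Ioc one_ne_zero)
  refine ⟨C / 4, fun x h hh => ?_⟩
  show |(Nat.card (a ⁻¹' Ioc x (x + h)) : ℝ) - h| ≤ 4 * (C / 4)
  have hupper : (Nat.card (a ⁻¹' Ioc x (x + h)) : ℝ) ≤ h + C := by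
    simpa using hdens.le_mul_of_forall_le_card_preimage_Ioc one_ne_zero (by positivity)
      fun y => Nat.cast_le.2 (hcmp x y h)
  have hlower : h - C ≤ (Nat.card (a ⁻¹' Ioc x (x + h)) : ℝ) := by
    rcases le_or_gt h C with hhC | hCh
    · linarith [(Nat.card (a ⁻¹' Ioc x (x + h))).cast_nonneg (α := ℝ)]
    · simpa using hdens.mul_le_of_forall_card_preimage_Ioc_le one_ne_zero (sub_pos.2 hCh)
        fun y => Nat.cast_le.2 (by simpa using hcmp y x (h - C))
  rw [mul_div_cancel₀ C four_ne_zero, abs_le]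
  constructor <;> linarith

/-- a nondecreasing almost periodic multiple discrete set in ℝ with density `1`
satisfies `|card(A ∩ (x, x+h]) − h| ≤ 4M` for some `M` and all `x ∈ ℝ`, `h > 0`. -/
theorem statement10 (a : ℤ → ℝ) (mono : Monotone a)
    (hap : ∀ ε : ℝ, 0 < ε → RelativelyDense {τ : ℝ | IsAlmostPeriodOf a ε τ})
    (hD : ∀ ε : ℝ, 0 < ε → ∃ R₀ : ℝ, 0 < R₀ ∧ ∀ R : ℝ, R₀ ≤ R → ∀ x : ℝ,
      |(Nat.card {k : ℤ | a k ∈ Set.Ioo (x - R) (x + R)} : ℝ) / (2 * R) - 1| < ε) :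
    ∃ M : ℝ, ∀ x : ℝ, ∀ h : ℝ, 0 < h →
      |(Nat.card {k : ℤ | a k ∈ Set.Ioc x (x + h)} : ℝ) - h| ≤ 4 * M :=
  statement10_general a hap hD
end

section
/- For any almost periodic multiple discrete set A in ℝ^p there exists M < ∞ such that card(A ∩ B(x,1)) < M for every x ∈ ℝ^p. -/
/-!
Take a continuous bump `φ ≥ 0` with compact support and `φ = 1` on the closed unit ball. The
count of `A` in `B(x, 1)` is at most `f (-x)`, where `f x = ∑ m(a) φ (x + a)` is the
convolution of `μ_A` with `φ`. Since `A` is discrete, `f` is a locally finite sum of continuous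
functions, hence continuous, hence bounded on the closed ball of radius `R` around `0`. Choosing
`R` so that every ball of radius `R` contains a `1`-almost period of `f`, every value of `f` is
within `1` of a value on that ball, so `f` is bounded on all of the space.
-/

open Metric Set MeasureTheory Classical

open Function
open scoped Pointwise

section Translates

variable {E ι : Type*} [TopologicalSpace E] [AddCommGroup E] [IsTopologicalAddGroup E]
  [LocallyCompactSpace E] {a : ι → E} {φ : E → ℝ}

theorem locallyFinite_support_comp_add (hdisc : ∀ K : Set E, IsCompact K → (a ⁻¹' K).Finite)
    (hφ : HasCompactSupport φ) : LocallyFinite fun i => support fun x => φ (x + a i) := by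
  intro x
  obtain ⟨K, hK, hKx⟩ := exists_compact_mem_nhds x
  refine ⟨K, hKx, (hdisc _ (hφ.isCompact.add hK.neg)).subset ?_⟩
  rintro i ⟨y, hy, hyK⟩
  have hmem : y + a i + -y ∈ tsupport φ + -K :=
    add_mem_add (subset_tsupport _ hy) (neg_mem_neg.mpr hyK)
  simpa [add_neg_cancel_comm] using hmem

theorem hasFiniteSupport_mul_comp_add (hdisc : ∀ K : Set E, IsCompact K → (a ⁻¹' K).Finite)
    (hφ : HasCompactSupport φ) (w : ι → ℝ) (x : E) :
    HasFiniteSupport fun i => w i * φ (x + a i) :=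
  ((locallyFinite_support_comp_add hdisc hφ).point_finite x).subset fun _ hi =>
    support_mul_subset_right _ _ hi

theorem continuous_tsum_mul_comp_add (hdisc : ∀ K : Set E, IsCompact K → (a ⁻¹' K).Finite)
    (hφc : Continuous φ) (hφ : HasCompactSupport φ) (w : ι → ℝ) :
    Continuous fun x => ∑' i, w i * φ (x + a i) := by
  have hlf : LocallyFinite fun i => support fun x => w i * φ (x + a i) :=
    (locallyFinite_support_comp_add hdisc hφ).subset fun _ =>
      support_mul_subset_right _ _
  simp_rw [tsum_eq_finsum (hasFiniteSupport_mul_comp_add hdisc hφ w _)]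
  exact continuous_finsum (fun i => continuous_const.mul (hφc.comp (continuous_add_const _))) hlf

end Translates

theorem AlmostPeriodic.bddAbove_range {E : Type*} [SeminormedAddCommGroup E] [ProperSpace E]
    {f : E → ℝ} (hf : AlmostPeriodic f) (hc : Continuous f) : BddAbove (range f) := by
  obtain ⟨R, -, hperiods⟩ := hf 1 one_pos
  obtain ⟨C, hC⟩ := (isCompact_closedBall (0 : E) R).bddAbove_image hc.continuousOn
  refine ⟨C + 1, ?_⟩
  rintro _ ⟨x, rfl⟩
  obtain ⟨τ, hτ, hdist⟩ := hperiods x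
  have hnear : |f (x - τ + τ) - f (x - τ)| < 1 := hτ (x - τ)
  have hball : x - τ ∈ closedBall (0 : E) R := by
    rw [mem_closedBall, dist_zero_right, ← dist_eq_norm, dist_comm]
    exact hdist.le
  have hle : f (x - τ) ≤ C := hC (mem_image_of_mem f hball)
  rw [sub_add_cancel] at hnear
  linarith [(abs_lt.mp hnear).2]

theorem tsum_ite_mem_ball_le {E ι : Type*} [SeminormedAddCommGroup E] {a : ι → E} (m : ι → ℕ)
    {φ : E → ℝ} {r : ℝ} (hφ0 : ∀ y, 0 ≤ φ y) (hφ1 : ∀ y ∈ ball (0 : E) r, 1 ≤ φ y) (x : E)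
    (hsum : Summable fun i => (m i : ℝ) * φ (-x + a i)) :
    ∑' i, (if a i ∈ ball x r then (m i : ENNReal) else 0) ≤
      ENNReal.ofReal (∑' i, (m i : ℝ) * φ (-x + a i)) := by
  rw [ENNReal.ofReal_tsum_of_nonneg (fun i => mul_nonneg (m i).cast_nonneg (hφ0 _)) hsum]
  refine ENNReal.tsum_le_tsum fun i => ?_
  split_ifs with hi
  · have hφi : 1 ≤ φ (-x + a i) := by
      refine hφ1 _ ?_
      rwa [mem_ball_zero_iff, neg_add_eq_sub, ← dist_eq_norm]
    rw [← ENNReal.ofReal_natCast]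
    exact ENNReal.ofReal_le_ofReal (le_mul_of_one_le_right (m i).cast_nonneg hφi)
  · exact zero_le

theorem statement11_general {p : ℕ} {ι : Type*} (a : ι → EuclideanSpace ℝ (Fin p)) (m : ι → ℕ)
    (hdisc : ∀ K : Set (EuclideanSpace ℝ (Fin p)), IsCompact K → (a ⁻¹' K).Finite)
    (hap : ∀ φ : EuclideanSpace ℝ (Fin p) → ℝ, Continuous φ → HasCompactSupport φ →
      AlmostPeriodic fun x => ∑' i, (m i : ℝ) * φ (x + a i)) :
    ∃ M : ENNReal, M ≠ ⊤ ∧ ∀ x : EuclideanSpace ℝ (Fin p),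
      (∑' i, (if a i ∈ Metric.ball x 1 then (m i : ENNReal) else 0)) < M := by
  obtain ⟨φ, hφ1, -, hφ, hφIcc⟩ := exists_continuous_one_zero_of_isCompact
    (isCompact_closedBall (0 : EuclideanSpace ℝ (Fin p)) 1) isClosed_empty (disjoint_empty _)
  have hcont := continuous_tsum_mul_comp_add hdisc φ.continuous hφ fun i => (m i : ℝ)
  obtain ⟨C, hC⟩ := (hap φ φ.continuous hφ).bddAbove_range hcont
  refine ⟨ENNReal.ofReal C + 1, by simp, fun x => ?_⟩
  calc (∑' i, (if a i ∈ ball x 1 then (m i : ENNReal) else 0))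
      ≤ ENNReal.ofReal (∑' i, (m i : ℝ) * φ (-x + a i)) :=
        tsum_ite_mem_ball_le m (fun y => (hφIcc y).1)
          (fun y hy => (hφ1 (ball_subset_closedBall hy)).ge)
          x (summable_of_hasFiniteSupport (hasFiniteSupport_mul_comp_add hdisc hφ _ _))
    _ ≤ ENNReal.ofReal C := ENNReal.ofReal_le_ofReal (hC (mem_range_self _))
    _ < ENNReal.ofReal C + 1 := ENNReal.lt_add_right ENNReal.ofReal_ne_top one_ne_zero

/-- an almost periodic multiple discrete set in ℝ^p has uniformly bounded
counts `card(A ∩ B(x,1)) < M` (counting with multiplicity). -/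
theorem statement11 {p : ℕ} {ι : Type*} (a : ι → EuclideanSpace ℝ (Fin p)) (m : ι → ℕ)
    (ha : Function.Injective a) (hm : ∀ i, 0 < m i)
    (hdisc : ∀ K : Set (EuclideanSpace ℝ (Fin p)), IsCompact K → (a ⁻¹' K).Finite)
    (hap : ∀ φ : EuclideanSpace ℝ (Fin p) → ℝ, Continuous φ → HasCompactSupport φ →
      AlmostPeriodic fun x => ∑' i, (m i : ℝ) * φ (x + a i)) :
    ∃ M : ENNReal, M ≠ ⊤ ∧ ∀ x : EuclideanSpace ℝ (Fin p),
      (∑' i, (if a i ∈ Metric.ball x 1 then (m i : ENNReal) else 0)) < M :=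
  statement11_general a m hdisc hap
end

section
/- There exists a signed multiple discrete set in ℝ whose associated signed measure is almost periodic in the sense of distributions but is not almost periodic in the weak sense (i.e., not almost periodic when tested against all continuous compactly supported functions). -/
open Metric Set MeasureTheory

namespace S15

/-- 2-adic valuation of an integer. -/
def v (n : ℤ) : ℕ := padicValInt 2 n

/-- half-gap -/
noncomputable def hh (n : ℤ) : ℝ := 1 / ((v n : ℝ) + 1)^2

lemma v_zero : v 0 = 0 := padicValInt.zero

lemma dvd_iff_le_v {n : ℤ} (hn : n ≠ 0) (k : ℕ) : (2:ℤ)^k ∣ n ↔ k ≤ v n := by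
  rw [show ((2:ℤ)) = ((2:ℕ):ℤ) by norm_num, padicValInt_dvd_iff]
  simp [hn, v]

lemma v_one_le {n : ℤ} (hn : n ≠ 0) (h2 : 2 ∣ n) : 1 ≤ v n := by
  rw [← dvd_iff_le_v hn 1]; simpa using h2

lemma v_sub_eq {n τ : ℤ} (hn : n ≠ 0) {k : ℕ} (hv : v n < k) (hτ : (2:ℤ)^k ∣ τ) :
    v (n - τ) = v n := by
  have hwn : (2:ℤ)^(v n) ∣ n := (dvd_iff_le_v hn _).mpr le_rfl
  have hwτ : (2:ℤ)^(v n + 1) ∣ τ := dvd_trans (pow_dvd_pow 2 (by omega)) hτ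
  have hnτ : n - τ ≠ 0 := by
    rintro h
    have : τ = n := by linarith [sub_eq_zero.mp h]
    exact absurd ((dvd_iff_le_v hn k).mp (this ▸ hτ)) (by omega)
  have h1 : (2:ℤ)^(v n) ∣ n - τ :=
    dvd_sub hwn (dvd_trans (pow_dvd_pow 2 (Nat.le_succ _)) hwτ)
  have h2 : ¬ (2:ℤ)^(v n + 1) ∣ n - τ := by
    intro h
    have : (2:ℤ)^(v n + 1) ∣ n := by
      have := dvd_add h hwτ; simpa using this
    exact absurd ((dvd_iff_le_v hn _).mp this) (by omega)
  have hle := (dvd_iff_le_v hnτ _).mp h1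
  have hlt : ¬ (v n + 1 ≤ v (n - τ)) := fun hc => h2 ((dvd_iff_le_v hnτ _).mpr hc)
  omega

lemma v_two_pow (V : ℕ) : v ((2:ℤ)^V) = V := by
  have : ((2:ℤ)^V).natAbs = 2^V := by simp [Int.natAbs_pow]
  rw [v, padicValInt, this, padicValNat.prime_pow]

lemma hh_pos (n : ℤ) : 0 < hh n := by
  have : (0:ℝ) < ((v n : ℝ) + 1)^2 := by positivity
  exact div_pos one_pos this

lemma hh_le_quarter {n : ℤ} (hn : n ≠ 0) (h2 : 2 ∣ n) : hh n ≤ 1/4 := by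
  have h1 := v_one_le hn h2
  have h1' : (2:ℝ) ≤ (v n : ℝ) + 1 := by
    have : (1:ℝ) ≤ (v n : ℝ) := by exact_mod_cast h1
    linarith
  have h4 : (4:ℝ) ≤ ((v n : ℝ) + 1)^2 := by nlinarith
  rw [hh, div_le_div_iff₀ (by positivity) (by norm_num)]
  linarith

lemma hh_le_one (n : ℤ) : hh n ≤ 1 := by
  have h : (1:ℝ) ≤ ((v n : ℝ) + 1)^2 := by nlinarith [Nat.cast_nonneg (α := ℝ) (v n)]
  rw [hh, div_le_one (by positivity)]
  exact h


/-- index type: nonzero even integers, with a sign bit -/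
def Idx : Type := {n : ℤ // n ≠ 0 ∧ 2 ∣ n} × Bool

def sg (b : Bool) : ℤ := if b then 1 else -1

noncomputable def pa (i : Idx) : ℝ := (i.1.1 : ℝ) + (sg i.2 : ℝ) * hh i.1.1

def pm (i : Idx) : ℤ := sg i.2 * (v i.1.1 : ℤ)

lemma sg_abs (b : Bool) : |(sg b : ℝ)| = 1 := by cases b <;> simp [sg]

lemma pm_ne_zero (i : Idx) : pm i ≠ 0 := by
  have h1 := v_one_le i.1.2.1 i.1.2.2
  cases hb : i.2 <;> simp [pm, sg, hb] <;> omega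

lemma pa_injective : Function.Injective pa := by
  rintro ⟨⟨n, hn⟩, b⟩ ⟨⟨n', hn'⟩, b'⟩ hab
  simp only [pa] at hab
  have h1 : |(sg b : ℝ) * hh n| ≤ 1/4 := by
    rw [abs_mul, sg_abs, one_mul, abs_of_pos (hh_pos n)]
    exact hh_le_quarter hn.1 hn.2
  have h1' : |(sg b' : ℝ) * hh n'| ≤ 1/4 := by
    rw [abs_mul, sg_abs, one_mul, abs_of_pos (hh_pos n')]
    exact hh_le_quarter hn'.1 hn'.2
  have hnn : n = n' := by
    have : |(n:ℝ) - (n':ℝ)| ≤ 1/2 := by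
      have : (n:ℝ) - n' = (sg b' : ℝ) * hh n' - (sg b : ℝ) * hh n := by linarith
      rw [this]
      calc |(sg b' : ℝ) * hh n' - (sg b : ℝ) * hh n| ≤ _ := abs_sub _ _
        _ ≤ 1/2 := by linarith
    have h2 : |(n:ℝ) - (n':ℝ)| = |((n - n' : ℤ) : ℝ)| := by push_cast; ring_nf
    rw [h2] at this
    have : |n - n'| ≤ 0 := by
      by_contra hc
      push_neg at hc
      have : (1:ℤ) ≤ |n - n'| := hc
      have : (1:ℝ) ≤ |((n - n' : ℤ) : ℝ)| := by exact_mod_cast (by exact_mod_cast this : (1:ℝ) ≤ (|n - n'| : ℤ))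
      linarith
    have := abs_nonpos_iff.mp this
    omega
  subst hnn
  have hb : (sg b : ℝ) = sg b' := by
    have hhp := hh_pos n
    have : (sg b : ℝ) * hh n = (sg b' : ℝ) * hh n := by linarith
    exact mul_right_cancel₀ (ne_of_gt hhp) this
  have : b = b' := by
    cases b <;> cases b' <;> simp [sg] at hb ⊢ <;> norm_num at hb
  subst this; rfl

/-- map to ℤ × Bool -/
def toZB (i : Idx) : ℤ × Bool := (i.1.1, i.2)

lemma toZB_inj : Function.Injective toZB := by
  rintro ⟨⟨n, hn⟩, b⟩ ⟨⟨n', hn'⟩, b'⟩ h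
  simp [toZB] at h
  obtain ⟨rfl, rfl⟩ := h; rfl

lemma finite_preimage_window (x M : ℝ) :
    {i : Idx | x + pa i ∈ Set.Icc (-M) M}.Finite := by
  have hsub : {i : Idx | x + pa i ∈ Set.Icc (-M) M} ⊆
      toZB ⁻¹' ((Set.Icc ⌈-M - x - 1⌉ ⌊M - x + 1⌋) ×ˢ (Set.univ : Set Bool)) := by
    rintro ⟨⟨n, hn⟩, b⟩ hi
    simp only [Set.mem_setOf_eq, Set.mem_Icc] at hi
    have h1 : |(sg b : ℝ) * hh n| ≤ 1 := by
      rw [abs_mul, sg_abs, one_mul, abs_of_pos (hh_pos n)]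
      exact hh_le_one n
    have habs := abs_le.mp h1
    show (n, b) ∈ (Set.Icc ⌈-M - x - 1⌉ ⌊M - x + 1⌋) ×ˢ (Set.univ : Set Bool)
    simp only [toZB, Set.mem_preimage, Set.mem_prod, Set.mem_Icc, Set.mem_univ, and_true]
    simp only [pa] at hi
    have hi : -M ≤ x + ((n:ℝ) + (sg b : ℝ) * hh n) ∧ x + ((n:ℝ) + (sg b : ℝ) * hh n) ≤ M := hi
    constructor
    · exact Int.ceil_le.mpr (by push_cast; linarith)
    · exact Int.le_floor.mpr (by push_cast; linarith)
  exact Set.Finite.subset (Set.Finite.preimage toZB_inj.injOn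
    ((Set.finite_Icc _ _).prod (Set.finite_univ))) hsub

lemma finite_preimage (K : Set ℝ) (hK : IsCompact K) : (pa ⁻¹' K).Finite := by
  obtain ⟨M, hM⟩ := hK.isBounded.subset_closedBall 0
  have : pa ⁻¹' K ⊆ {i : Idx | 0 + pa i ∈ Set.Icc (-M) M} := by
    intro i hi
    have := hM hi
    simp only [Metric.mem_closedBall, Real.dist_eq, sub_zero] at this
    simp only [Set.mem_setOf_eq, zero_add, Set.mem_Icc]
    exact abs_le.mp this
  exact (finite_preimage_window 0 M).subset this

/-! ### The paired sum over ℤ -/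

noncomputable def G (φ : ℝ → ℝ) (x : ℝ) (n : ℤ) : ℝ :=
  (v (2*n) : ℝ) * (φ (x + 2*n + hh (2*n)) - φ (x + 2*n - hh (2*n)))

/-- the even-integer subtype -/
def Sub : Type := {n : ℤ // n ≠ 0 ∧ 2 ∣ n}

def emb (s : Sub) : ℤ := s.1 / 2

lemma two_mul_emb (s : Sub) : 2 * emb s = s.1 := Int.mul_ediv_cancel' s.2.2

lemma emb_inj : Function.Injective emb := by
  rintro ⟨n, hn⟩ ⟨n', hn'⟩ h
  have h1 : 2 * ((⟨n,hn⟩ : Sub).1 / 2) = n := Int.mul_ediv_cancel' hn.2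
  have h2 : 2 * ((⟨n',hn'⟩ : Sub).1 / 2) = n' := Int.mul_ediv_cancel' hn'.2
  simp only [emb] at h
  have : n = n' := by rw [← h1, ← h2]; exact congrArg (2 * ·) h
  exact Subtype.ext this

lemma phi_zero_outside {φ : ℝ → ℝ} {M : ℝ} (hM : tsupport φ ⊆ Set.Icc (-M) M)
    {t : ℝ} (ht : t ∉ Set.Icc (-M) M) : φ t = 0 := by
  by_contra h
  exact ht (hM (subset_tsupport φ h))

/-- support window of `G φ x`. -/
lemma G_support {φ : ℝ → ℝ} {M : ℝ} (hM : tsupport φ ⊆ Set.Icc (-M) M)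
    (x : ℝ) {n : ℤ} (hn : ¬ (x + 2*(n:ℝ) ∈ Set.Icc (-(M+1)) (M+1))) : G φ x n = 0 := by
  simp only [Set.mem_Icc, not_and_or, not_le] at hn
  have h1 := hh_pos (2*n)
  have h2 := hh_le_one (2*n)
  have e1 : φ (x + 2*(n:ℝ) + hh (2*n)) = 0 := by
    apply phi_zero_outside hM
    simp only [Set.mem_Icc, not_and_or, not_le]
    rcases hn with h | h
    · left; linarith
    · right; linarith
  have e2 : φ (x + 2*(n:ℝ) - hh (2*n)) = 0 := by
    apply phi_zero_outside hM
    simp only [Set.mem_Icc, not_and_or, not_le]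
    rcases hn with h | h
    · left; linarith
    · right; linarith
  simp only [G]
  push_cast
  rw [e1, e2]
  ring

/-- finite support of G φ x -/
lemma G_finite_support {φ : ℝ → ℝ} {M : ℝ} (hM : tsupport φ ⊆ Set.Icc (-M) M) (x : ℝ) :
    ∀ n ∉ Finset.Icc ⌈(-(M+1) - x)/2⌉ ⌊((M+1) - x)/2⌋, G φ x n = 0 := by
  intro n hn
  apply G_support hM
  intro hmem
  apply hn
  simp only [Set.mem_Icc] at hmem
  simp only [Finset.mem_Icc]
  constructor
  · exact Int.ceil_le.mpr (by push_cast; linarith)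
  · exact Int.le_floor.mpr (by push_cast; linarith)

lemma G_summable {φ : ℝ → ℝ} {M : ℝ} (hM : tsupport φ ⊆ Set.Icc (-M) M) (x : ℝ) :
    Summable (G φ x) :=
  summable_of_ne_finset_zero (G_finite_support hM x)

lemma F_finite_support {φ : ℝ → ℝ} {M : ℝ} (hM : tsupport φ ⊆ Set.Icc (-M) M) (x : ℝ) :
    {i : Idx | (pm i : ℝ) * φ (x + pa i) ≠ 0}.Finite := by
  apply (finite_preimage_window x M).subset
  intro i hi
  simp only [Set.mem_setOf_eq] at hi ⊢
  by_contra h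
  exact hi (by rw [phi_zero_outside hM h, mul_zero])

lemma F_summable {φ : ℝ → ℝ} {M : ℝ} (hM : tsupport φ ⊆ Set.Icc (-M) M) (x : ℝ) :
    Summable (fun i : Idx => (pm i : ℝ) * φ (x + pa i)) := by
  apply summable_of_ne_finset_zero (s := (F_finite_support hM x).toFinset)
  intro i hi
  by_contra h
  exact hi ((F_finite_support hM x).mem_toFinset.mpr h)

/-- Lemma A: the tsum over Idx equals the paired tsum over ℤ. -/
lemma lemmaA {φ : ℝ → ℝ} {M : ℝ} (hM : tsupport φ ⊆ Set.Icc (-M) M) (x : ℝ) :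
    ∑' i : Idx, (pm i : ℝ) * φ (x + pa i) = ∑' n : ℤ, G φ x n := by
  have h1 : ∑' i : Idx, (pm i : ℝ) * φ (x + pa i)
      = ∑' (s : Sub) (b : Bool), (pm (s, b) : ℝ) * φ (x + pa (s, b)) :=
    Summable.tsum_prod' (F_summable hM x) (fun s => Summable.of_finite)
  rw [h1]
  have h2 : ∀ s : Sub, (∑' b : Bool, (pm (s, b) : ℝ) * φ (x + pa (s, b)))
      = G φ x (emb s) := by
    rintro ⟨n, hn⟩
    rw [tsum_bool]
    have h2n : (2 * emb (⟨n, hn⟩ : Sub) : ℤ) = n := two_mul_emb _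
    have h2r : 2 * ((emb (⟨n, hn⟩ : Sub) : ℤ) : ℝ) = (n : ℝ) := by exact_mod_cast h2n
    simp only [G, pm, pa, sg, h2n]
    norm_num
    rw [show (2:ℝ) * ((emb (⟨n, hn⟩ : Sub) : ℤ) : ℝ) = (n : ℝ) from h2r]
    ring
  calc ∑' (s : Sub) (b : Bool), (pm (s, b) : ℝ) * φ (x + pa (s, b))
      = ∑' s : Sub, G φ x (emb s) := by
        congr 1; funext s; exact h2 s
    _ = ∑' n : ℤ, G φ x n := by
        apply emb_inj.tsum_eq
        intro n hn
        have hn0 : n ≠ 0 := by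
          intro h
          apply hn
          simp only [Function.mem_support, h, G] at hn ⊢
          subst h
          simp [G, v_zero] at hn
        refine ⟨⟨2*n, ⟨by omega, ⟨n, rfl⟩⟩⟩, ?_⟩
        simp [emb]

/-! ### Estimates for the smooth part -/

lemma G_abs_le {φ : ℝ → ℝ} {L : ℝ} (hL : 0 ≤ L)
    (hLip : ∀ s t : ℝ, |φ s - φ t| ≤ L * |s - t|) (x : ℝ) (n : ℤ) :
    |G φ x n| ≤ 2 * L / ((v (2*n) : ℝ) + 1) := by
  have hp := hh_pos (2*n)
  have hvn : (0:ℝ) ≤ (v (2*n) : ℝ) := Nat.cast_nonneg _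
  have h1 : |G φ x n| ≤ (v (2*n) : ℝ) * (L * (2 * hh (2*n))) := by
    rw [G, abs_mul, abs_of_nonneg hvn]
    apply mul_le_mul_of_nonneg_left _ hvn
    calc |φ (x + 2*(n:ℝ) + hh (2*n)) - φ (x + 2*(n:ℝ) - hh (2*n))|
        ≤ L * |(x + 2*(n:ℝ) + hh (2*n)) - (x + 2*(n:ℝ) - hh (2*n))| := hLip _ _
      _ = L * (2 * hh (2*n)) := by rw [show (x + 2*(n:ℝ) + hh (2*n)) - (x + 2*(n:ℝ) - hh (2*n)) = 2 * hh (2*n) by ring, abs_of_pos (by linarith)]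
  refine h1.trans ?_
  rw [hh]
  have hv1 : (0:ℝ) < (v (2*n) : ℝ) + 1 := by positivity
  have key : (v (2*n):ℝ) * (L * (2 * (1 / ((v (2*n):ℝ)+1)^2)))
      = 2*L*((v (2*n):ℝ)/((v (2*n):ℝ)+1)^2) := by ring
  rw [key]
  have h5 : ((v (2*n):ℝ))/(((v (2*n):ℝ))+1)^2 ≤ 1/(((v (2*n):ℝ))+1) := by
    rw [div_le_div_iff₀ (by positivity) hv1]
    nlinarith
  calc 2*L*((v (2*n):ℝ)/((v (2*n):ℝ)+1)^2) ≤ 2*L*(1/((v (2*n):ℝ)+1)) :=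
        mul_le_mul_of_nonneg_left h5 (by linarith)
    _ = 2*L/((v (2*n):ℝ)+1) := by ring

lemma G_abs_le_k {φ : ℝ → ℝ} {L : ℝ} (hL : 0 ≤ L)
    (hLip : ∀ s t : ℝ, |φ s - φ t| ≤ L * |s - t|) (x : ℝ) {n : ℤ} {k : ℕ}
    (hk : n = 0 ∨ k ≤ v (2*n)) :
    |G φ x n| ≤ 2 * L / ((k:ℝ) + 1) := by
  rcases hk with h | h
  · subst h
    simp only [G, mul_zero, v_zero]
    norm_num
    positivity
  · refine (G_abs_le hL hLip x n).trans ?_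
    apply div_le_div_of_nonneg_left (by linarith) (by positivity)
    exact_mod_cast Nat.add_le_add_right h 1

/-- The key almost-period estimate. -/
lemma key_est {φ : ℝ → ℝ} {M L : ℝ} (hM : tsupport φ ⊆ Set.Icc (-M) M)
    (hM0 : 0 ≤ M) (hL : 0 ≤ L)
    (hLip : ∀ s t : ℝ, |φ s - φ t| ≤ L * |s - t|)
    {k : ℕ} (hk1 : 1 ≤ k) {t : ℤ} (ht : (2:ℤ)^k ∣ 2*t) (x : ℝ) :
    |(∑' n : ℤ, G φ (x + ((2*t : ℤ):ℝ)) n) - ∑' n : ℤ, G φ x n|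
      ≤ (M + 2) * (4 * L / ((k:ℝ) + 1)) := by
  set τ : ℝ := ((2*t : ℤ):ℝ) with hτ
  -- reindex
  have hre : ∑' n : ℤ, G φ (x + τ) n = ∑' n : ℤ, G φ (x + τ) (n - t) :=
    ((Equiv.subRight t).tsum_eq (G φ (x + τ))).symm
  rw [hre]
  have hs1 : Summable (fun n : ℤ => G φ (x + τ) (n - t)) :=
    ((Equiv.subRight t).summable_iff (f := G φ (x + τ))).mpr (G_summable hM (x + τ))
  have hs2 := G_summable hM x
  rw [← Summable.tsum_sub hs1 hs2]
  set D : ℤ → ℝ := fun n => G φ (x + τ) (n - t) - G φ x n with hD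
  -- basic computation: the argument shift
  have harg : ∀ n : ℤ, (x + τ) + 2*((n - t : ℤ):ℝ) = x + 2*(n:ℝ) := by
    intro n; rw [hτ]; push_cast; ring
  -- case 1 : good indices vanish
  have hgood : ∀ n : ℤ, n ≠ 0 → v (2*n) < k → D n = 0 := by
    intro n hn0 hvk
    have h2n0 : (2*n : ℤ) ≠ 0 := by omega
    have hveq : v (2*n - 2*t) = v (2*n) := v_sub_eq h2n0 hvk ht
    have h2nt : 2*(n - t) = 2*n - 2*t := by ring
    have hhh : hh (2*n - 2*t) = hh (2*n) := by unfold hh; rw [hveq]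
    have ha : x + τ + 2*(((n - t):ℤ):ℝ) = x + 2*(n:ℝ) := by rw [hτ]; push_cast; ring
    simp only [hD, G, h2nt, hveq, hhh, ha]
    ring
  -- case 2 : each bad term is small
  have hbad : ∀ n : ℤ, |D n| ≤ 4 * L / ((k:ℝ) + 1) := by
    intro n
    rcases Classical.em (n ≠ 0 ∧ v (2*n) < k) with ⟨hn0, hvk⟩ | hc
    · rw [hgood n hn0 hvk]
      simp only [abs_zero]
      positivity
    · push_neg at hc
      have hcase : n = 0 ∨ k ≤ v (2*n) := by
        rcases Classical.em (n = 0) with h | h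
        · exact Or.inl h
        · exact Or.inr (hc h)
      have hb1 : |G φ x n| ≤ 2 * L / ((k:ℝ) + 1) := G_abs_le_k hL hLip x hcase
      have hdvd2n : (2:ℤ)^k ∣ 2*n := by
        rcases hcase with h | h
        · simp [h]
        · rcases Classical.em ((2*n:ℤ) = 0) with h0 | h0
          · simp [h0]
          · exact (dvd_iff_le_v h0 k).mpr h
      have hcase2 : (n - t) = 0 ∨ k ≤ v (2*(n - t)) := by
        rcases Classical.em ((n - t : ℤ) = 0) with h0 | h0
        · exact Or.inl h0
        · refine Or.inr ((dvd_iff_le_v (by omega : (2*(n-t) : ℤ) ≠ 0) k).mp ?_)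
          have : (2*(n - t) : ℤ) = 2*n - 2*t := by ring
          rw [this]
          exact dvd_sub hdvd2n ht
      have hb2 : |G φ (x + τ) (n - t)| ≤ 2 * L / ((k:ℝ) + 1) :=
        G_abs_le_k hL hLip (x + τ) hcase2
      calc |D n| ≤ |G φ (x + τ) (n - t)| + |G φ x n| := abs_sub _ _
        _ ≤ 2 * L / ((k:ℝ) + 1) + 2 * L / ((k:ℝ) + 1) := add_le_add hb2 hb1
        _ = 4 * L / ((k:ℝ) + 1) := by ring
  -- support window
  set A : ℤ := ⌈(-(M+1) - x)/2⌉ with hA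
  set B : ℤ := ⌊((M+1) - x)/2⌋ with hB
  have hsupp : ∀ n ∉ Finset.Icc A B, D n = 0 := by
    intro n hn
    have hout : ¬ (x + 2*(n:ℝ) ∈ Set.Icc (-(M+1)) (M+1)) := by
      intro hmem
      apply hn
      simp only [Set.mem_Icc] at hmem
      simp only [Finset.mem_Icc, hA, hB]
      exact ⟨Int.ceil_le.mpr (by linarith), Int.le_floor.mpr (by linarith)⟩
    have h1 : G φ x n = 0 := G_support hM x hout
    have h2 : G φ (x + τ) (n - t) = 0 := by
      apply G_support hM (x + τ)
      rw [harg n]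
      exact hout
    simp [hD, h1, h2]
  rw [tsum_eq_sum hsupp]
  have hcard : ((Finset.Icc A B).card : ℝ) ≤ M + 2 := by
    rcases le_or_gt (B + 1 - A) 0 with h | h
    · have : Finset.Icc A B = ∅ := by
        apply Finset.Icc_eq_empty
        omega
      rw [this]
      simp
      linarith
    · rw [Int.card_Icc]
      have h1 : (B:ℝ) ≤ ((M+1) - x)/2 := Int.floor_le _
      have h2 : ((-(M+1) - x)/2 : ℝ) ≤ (A:ℝ) := Int.le_ceil _
      have h3 : ((B + 1 - A).toNat : ℤ) = B + 1 - A := Int.toNat_of_nonneg (by omega)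
      have h4 : (((B + 1 - A).toNat : ℤ) : ℝ) = (B:ℝ) + 1 - A := by rw [h3]; push_cast; ring
      push_cast at h4 ⊢
      rw [h4]
      linarith
  calc |∑ n ∈ Finset.Icc A B, D n| ≤ ∑ n ∈ Finset.Icc A B, |D n| :=
        Finset.abs_sum_le_sum_abs _ _
    _ ≤ ∑ _n ∈ Finset.Icc A B, (4 * L / ((k:ℝ) + 1)) :=
        Finset.sum_le_sum (fun n _ => hbad n)
    _ = ((Finset.Icc A B).card : ℝ) * (4 * L / ((k:ℝ) + 1)) := by
        rw [Finset.sum_const, nsmul_eq_mul]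
    _ ≤ (M + 2) * (4 * L / ((k:ℝ) + 1)) := by
        apply mul_le_mul_of_nonneg_right hcard
        positivity

/-! ### The smooth almost periodicity -/

lemma tsupport_subset_Icc {φ : ℝ → ℝ} (hc : HasCompactSupport φ) :
    ∃ M : ℝ, 0 ≤ M ∧ tsupport φ ⊆ Set.Icc (-M) M := by
  obtain ⟨M₀, hM₀⟩ := hc.isCompact.isBounded.subset_closedBall 0
  refine ⟨|M₀|, abs_nonneg _, ?_⟩
  intro y hy
  have := hM₀ hy
  simp only [Metric.mem_closedBall, Real.dist_eq, sub_zero] at this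
  have h2 : |y| ≤ |M₀| := this.trans (le_abs_self _)
  simpa [Set.mem_Icc] using abs_le.mp h2

lemma smooth_AP (φ : ℝ → ℝ) (hφ : ContDiff ℝ (⊤ : ℕ∞) φ) (hc : HasCompactSupport φ) :
    AlmostPeriodic (fun x => ∑' i : Idx, (pm i : ℝ) * φ (x + pa i)) := by
  obtain ⟨M, hM0, hM⟩ := tsupport_subset_Icc hc
  -- Lipschitz bound from the derivative
  have hder : Continuous (deriv φ) := (hφ.continuous_deriv (by simp))
  obtain ⟨C, hC⟩ := hder.bounded_above_of_compact_support hc.deriv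
  set L : ℝ := max C 0 with hLdef
  have hL : 0 ≤ L := le_max_right _ _
  have hLip : ∀ s t : ℝ, |φ s - φ t| ≤ L * |s - t| := by
    intro s t
    have := convex_univ.norm_image_sub_le_of_norm_deriv_le (𝕜 := ℝ) (f := φ) (C := L)
      (fun y _ => (hφ.differentiable (by simp)).differentiableAt)
      (fun y _ => (hC y).trans (le_max_left _ _)) (Set.mem_univ t) (Set.mem_univ s)
    simpa [Real.norm_eq_abs] using this
  intro ε hε
  obtain ⟨N, hN⟩ := exists_nat_gt ((M + 2) * (4 * L) / ε)
  set k : ℕ := N + 1 with hk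
  have hεk : (M + 2) * (4 * L / ((k:ℝ) + 1)) < ε := by
    have hk1 : (0:ℝ) < (k:ℝ) + 1 := by positivity
    rw [show (M + 2) * (4 * L / ((k:ℝ) + 1)) = (M + 2) * (4 * L) / ((k:ℝ) + 1) by ring,
      div_lt_iff₀ hk1]
    have h1 : (M + 2) * (4 * L) / ε < (N:ℝ) := hN
    have h2 : (M + 2) * (4 * L) < ε * N := by
      rw [div_lt_iff₀ hε] at h1
      linarith
    have h3 : (N:ℝ) ≤ (k:ℝ) + 1 := by
      rw [hk]; push_cast; linarith
    nlinarith
  refine ⟨(2:ℝ)^k + 1, by positivity, ?_⟩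
  intro c
  set t' : ℤ := ⌊c / (2:ℝ)^k⌋ with ht'
  set tt : ℤ := 2^N * t' with htt
  have hdvd : (2:ℤ)^k ∣ 2 * tt := ⟨t', by rw [htt, hk]; ring⟩
  have hτr : ((2 * tt : ℤ) : ℝ) = (2:ℝ)^k * (t' : ℝ) := by
    rw [htt, hk]; push_cast; ring
  refine ⟨((2 * tt : ℤ) : ℝ), ?_, ?_⟩
  · -- almost period property
    intro x
    simp only
    rw [lemmaA hM, lemmaA hM]
    calc |(∑' n : ℤ, G φ (x + ((2 * tt : ℤ) : ℝ)) n) - ∑' n : ℤ, G φ x n|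
        ≤ (M + 2) * (4 * L / ((k:ℝ) + 1)) :=
          key_est hM hM0 hL hLip (by omega) hdvd x
      _ < ε := hεk
  · -- distance
    have h2k : (0:ℝ) < (2:ℝ)^k := by positivity
    have hf1 : (t' : ℝ) ≤ c / (2:ℝ)^k := Int.floor_le _
    have hf2 : c / (2:ℝ)^k - 1 < (t' : ℝ) := by
      have := Int.sub_one_lt_floor (c / (2:ℝ)^k)
      linarith
    rw [Real.dist_eq, hτr]
    have hub : (2:ℝ)^k * (t' : ℝ) ≤ c := by
      rw [mul_comm, ← le_div_iff₀ h2k]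
      exact hf1
    have hlb : c - (2:ℝ)^k < (2:ℝ)^k * (t' : ℝ) := by
      have := mul_lt_mul_of_pos_left hf2 h2k
      calc c - (2:ℝ)^k = (2:ℝ)^k * (c / (2:ℝ)^k - 1) := by field_simp
        _ < (2:ℝ)^k * (t' : ℝ) := this
    rw [abs_lt]
    constructor <;> linarith

/-! ### The continuous counterexample -/

noncomputable def phi0 (t : ℝ) : ℝ := max 0 (1 - Real.sqrt (Real.sqrt |t|))

lemma phi0_continuous : Continuous phi0 :=
  continuous_const.max (continuous_const.sub
    ((Real.continuous_sqrt.comp Real.continuous_sqrt).comp continuous_abs))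

lemma phi0_nonneg (t : ℝ) : 0 ≤ phi0 t := le_max_left _ _

lemma phi0_le_one (t : ℝ) : phi0 t ≤ 1 := by
  apply max_le (by norm_num)
  have : 0 ≤ Real.sqrt (Real.sqrt |t|) := Real.sqrt_nonneg _
  linarith

lemma phi0_zero : phi0 0 = 1 := by
  simp [phi0]

lemma phi0_eq_zero {t : ℝ} (ht : 1 ≤ |t|) : phi0 t = 0 := by
  have h1 : (1:ℝ) ≤ Real.sqrt |t| := by
    rw [show (1:ℝ) = Real.sqrt 1 by simp]
    exact Real.sqrt_le_sqrt ht
  have h2 : (1:ℝ) ≤ Real.sqrt (Real.sqrt |t|) := by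
    rw [show (1:ℝ) = Real.sqrt 1 by simp]
    exact Real.sqrt_le_sqrt h1
  simp only [phi0]
  rw [max_eq_left]
  linarith

lemma phi0_tsupport : tsupport phi0 ⊆ Set.Icc (-1) 1 := by
  apply closure_minimal _ isClosed_Icc
  intro t ht
  simp only [Function.mem_support] at ht
  by_contra hmem
  apply ht
  apply phi0_eq_zero
  simp only [Set.mem_Icc, not_and_or, not_le] at hmem
  rcases hmem with h | h
  · rw [abs_of_neg (by linarith)]; linarith
  · rw [abs_of_pos (by linarith)]; linarith

lemma phi0_compact_support : HasCompactSupport phi0 :=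
  HasCompactSupport.of_support_subset_isCompact isCompact_Icc
    ((subset_tsupport phi0).trans phi0_tsupport)

lemma phi0_neg_small {u : ℝ} (h0 : 0 ≤ u) (h1 : u ≤ 1) :
    phi0 (-u) = 1 - Real.sqrt (Real.sqrt u) := by
  have habs : |(-u)| = u := by rw [abs_neg, abs_of_nonneg h0]
  have hsq : Real.sqrt (Real.sqrt u) ≤ 1 := by
    rw [show (1:ℝ) = Real.sqrt (Real.sqrt 1) by simp]
    exact Real.sqrt_le_sqrt (Real.sqrt_le_sqrt h1)
  simp only [phi0, habs]
  rw [max_eq_right]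
  linarith

/-- value of the paired sum at the special point -/
lemma big_value (W : ℕ) :
    ((W:ℝ) + 1) / Real.sqrt ((W:ℝ) + 2) ≤
      ∑' n : ℤ, G phi0 (-(2:ℝ)^(W+1) - hh (2^(W+1))) n := by
  set x₀ : ℝ := -(2:ℝ)^(W+1) - hh (2^(W+1)) with hx₀
  have h2pow : (2:ℤ) * 2^W = 2^(W+1) := by ring
  have hhq : hh ((2:ℤ)^(W+1)) ≤ 1/4 :=
    hh_le_quarter (by positivity) ⟨2^W, by ring⟩
  have hhp : 0 < hh ((2:ℤ)^(W+1)) := hh_pos _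
  -- single term
  have hsingle : ∑' n : ℤ, G phi0 x₀ n = G phi0 x₀ (2^W) := by
    apply tsum_eq_single
    intro n hn
    rcases Classical.em (n = 0) with h0 | h0
    · subst h0; simp [G, v_zero]
    · have hq2 : hh (2*n) ≤ 1/4 := hh_le_quarter (by omega) ⟨n, rfl⟩
      have hp2 : 0 < hh (2*n) := hh_pos _
      have hfar : (2:ℝ) ≤ |2*(n:ℝ) - (2:ℝ)^(W+1)| := by
        have hne : (n : ℤ) ≠ 2^W := hn
        have : (1:ℤ) ≤ |n - 2^W| := by
          rcases lt_or_gt_of_ne hne with h | h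
          · rw [abs_of_neg (by omega)]; omega
          · rw [abs_of_pos (by omega)]; omega
        have hcast : (1:ℝ) ≤ |(n:ℝ) - (2:ℝ)^W| := by
          rw [show |((n:ℝ)) - 2^W| = |((n - 2^W : ℤ) : ℝ)| by push_cast; ring_nf]
          calc (1:ℝ) = ((1:ℤ):ℝ) := by norm_num
            _ ≤ |((n - 2^W : ℤ) : ℝ)| := by
                rw [← Int.cast_abs]
                exact_mod_cast this
        have : |2*(n:ℝ) - (2:ℝ)^(W+1)| = 2 * |(n:ℝ) - (2:ℝ)^W| := by
          rw [show 2*(n:ℝ) - (2:ℝ)^(W+1) = 2*((n:ℝ) - 2^W) by ring, abs_mul]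
          norm_num
        rw [this]
        linarith
      have harg : ∀ s : ℝ, |s| ≤ 1/4 → 1 ≤ |x₀ + 2*(n:ℝ) + s| := by
        intro s hs
        have h1 : x₀ + 2*(n:ℝ) + s = (2*(n:ℝ) - (2:ℝ)^(W+1)) + (s - hh (2^(W+1))) := by
          rw [hx₀]; ring
        have h2 : |s - hh (2^(W+1))| ≤ 1/2 := by
          rw [abs_le] at hs ⊢
          constructor <;> [linarith; linarith]
        rw [h1]
        have := abs_sub_abs_le_abs_sub (2*(n:ℝ) - (2:ℝ)^(W+1)) (-(s - hh (2^(W+1))))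
        have h3 : |(2*(n:ℝ) - (2:ℝ)^(W+1)) + (s - hh (2^(W+1)))|
            ≥ |2*(n:ℝ) - (2:ℝ)^(W+1)| - |s - hh (2^(W+1))| := by
          calc |2*(n:ℝ) - (2:ℝ)^(W+1)| - |s - hh (2^(W+1))|
              = |2*(n:ℝ) - (2:ℝ)^(W+1)| - |-(s - hh (2^(W+1)))| := by rw [abs_neg]
            _ ≤ |(2*(n:ℝ) - (2:ℝ)^(W+1)) - -(s - hh (2^(W+1)))| := abs_sub_abs_le_abs_sub _ _
            _ = |(2*(n:ℝ) - (2:ℝ)^(W+1)) + (s - hh (2^(W+1)))| := by ring_nf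
        linarith
      have e1 : phi0 (x₀ + 2*(n:ℝ) + hh (2*n)) = 0 :=
        phi0_eq_zero (harg _ (by rw [abs_of_pos hp2]; linarith))
      have e2 : phi0 (x₀ + 2*(n:ℝ) - hh (2*n)) = 0 := by
        have := harg (-hh (2*n)) (by rw [abs_neg, abs_of_pos hp2]; linarith)
        exact phi0_eq_zero (by rw [show x₀ + 2*(n:ℝ) - hh (2*n) = x₀ + 2*(n:ℝ) + (-hh (2*n)) by ring]; exact this)
      simp [G, e1, e2]
  rw [hsingle]
  -- compute the single term
  have hcast : (2:ℝ) * (((2:ℤ)^W : ℤ) : ℝ) = (2:ℝ)^(W+1) := by push_cast; ring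
  have hargs1 : x₀ + 2*(((2:ℤ)^W : ℤ):ℝ) + hh (2 * 2^W) = 0 := by
    rw [h2pow, hx₀, hcast]; ring
  have hargs2 : x₀ + 2*(((2:ℤ)^W : ℤ):ℝ) - hh (2 * 2^W) = -(2 * hh (2^(W+1))) := by
    rw [h2pow, hx₀, hcast]; ring
  have hv : v (2 * 2^W) = W + 1 := by rw [h2pow]; exact v_two_pow _
  have hval : G phi0 x₀ (2^W)
      = ((W:ℝ) + 1) * Real.sqrt (Real.sqrt (2 * hh (2^(W+1)))) := by
    simp only [G, hargs1, hargs2, hv, phi0_zero]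
    rw [phi0_neg_small (by linarith) (by linarith)]
    push_cast
    ring
  rw [hval]
  -- lower bound the sqrt
  have hhh : hh ((2:ℤ)^(W+1)) = 1 / ((W:ℝ)+2)^2 := by
    rw [hh, v_two_pow]; push_cast; field_simp; ring
  have hs1 : 1 / Real.sqrt ((W:ℝ) + 2) ≤ Real.sqrt (Real.sqrt (2 * hh (2^(W+1)))) := by
    have hW2 : (0:ℝ) < (W:ℝ) + 2 := by positivity
    have e1 : Real.sqrt (1 / ((W:ℝ)+2)^2) = 1 / ((W:ℝ)+2) := by
      rw [one_div, one_div, Real.sqrt_inv, Real.sqrt_sq hW2.le]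
    have e2 : Real.sqrt (1 / ((W:ℝ)+2)) = 1 / Real.sqrt ((W:ℝ)+2) := by
      rw [show (1:ℝ) / ((W:ℝ)+2) = 1 / ((W:ℝ)+2) from rfl, Real.sqrt_div' 1 hW2.le]
      · simp
    have hmono : hh ((2:ℤ)^(W+1)) ≤ 2 * hh (2^(W+1)) := by linarith
    calc 1 / Real.sqrt ((W:ℝ) + 2) = Real.sqrt (Real.sqrt (hh ((2:ℤ)^(W+1)))) := by
          rw [hhh, e1, e2]
      _ ≤ Real.sqrt (Real.sqrt (2 * hh (2^(W+1)))) :=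
          Real.sqrt_le_sqrt (Real.sqrt_le_sqrt hmono)
  calc ((W:ℝ) + 1) / Real.sqrt ((W:ℝ) + 2)
      = ((W:ℝ) + 1) * (1 / Real.sqrt ((W:ℝ) + 2)) := by ring
    _ ≤ ((W:ℝ) + 1) * Real.sqrt (Real.sqrt (2 * hh (2^(W+1)))) :=
        mul_le_mul_of_nonneg_left hs1 (by positivity)

/-! ### The weak sense fails -/

lemma bound_window (R : ℝ) (hR : 0 < R) :
    ∃ B : ℝ, 0 ≤ B ∧ ∀ y : ℝ, |y| ≤ R → |∑' n : ℤ, G phi0 y n| ≤ B := by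
  set WF : Finset ℤ := Finset.Icc (-(⌈R⌉+1)) (⌈R⌉+1) with hWF
  refine ⟨∑ n ∈ WF, 2*((v (2*n)):ℝ), Finset.sum_nonneg (fun n _ => by positivity), ?_⟩
  intro y hy
  have hceil : R ≤ (⌈R⌉ : ℝ) := Int.le_ceil R
  have hceil0 : (0:ℝ) ≤ (⌈R⌉ : ℝ) := le_trans hR.le hceil
  have hzero : ∀ n ∉ WF, G phi0 y n = 0 := by
    intro n hn
    apply G_support phi0_tsupport
    intro hmem
    apply hn
    simp only [Set.mem_Icc] at hmem
    have hy' := abs_le.mp hy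
    simp only [hWF, Finset.mem_Icc]
    constructor
    · have hreal : (-(⌈R⌉:ℝ) - 1) ≤ (n:ℝ) := by nlinarith [hmem.1, hmem.2]
      exact_mod_cast (by push_cast; linarith : ((-(⌈R⌉+1) : ℤ) : ℝ) ≤ (n:ℝ))
    · have hreal : (n:ℝ) ≤ (⌈R⌉:ℝ) + 1 := by nlinarith [hmem.1, hmem.2]
      exact_mod_cast (by push_cast; linarith : ((n:ℝ)) ≤ (((⌈R⌉+1) : ℤ) : ℝ))
  rw [tsum_eq_sum hzero]
  refine (Finset.abs_sum_le_sum_abs _ _).trans (Finset.sum_le_sum ?_)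
  intro n _
  have h1 : |phi0 (y + 2*(n:ℝ) + hh (2*n)) - phi0 (y + 2*(n:ℝ) - hh (2*n))| ≤ 2 := by
    have a1 := phi0_nonneg (y + 2*(n:ℝ) + hh (2*n))
    have a2 := phi0_le_one (y + 2*(n:ℝ) + hh (2*n))
    have a3 := phi0_nonneg (y + 2*(n:ℝ) - hh (2*n))
    have a4 := phi0_le_one (y + 2*(n:ℝ) - hh (2*n))
    rw [abs_le]
    constructor <;> linarith
  calc |G phi0 y n| = (v (2*n):ℝ) * |phi0 (y + 2*(n:ℝ) + hh (2*n)) - phi0 (y + 2*(n:ℝ) - hh (2*n))| := by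
        rw [G, abs_mul, abs_of_nonneg (Nat.cast_nonneg _)]
    _ ≤ (v (2*n):ℝ) * 2 := mul_le_mul_of_nonneg_left h1 (Nat.cast_nonneg _)
    _ = 2*((v (2*n)):ℝ) := by ring

lemma not_weak : ¬ AlmostPeriodic (fun x => ∑' i : Idx, (pm i : ℝ) * phi0 (x + pa i)) := by
  intro hAP
  obtain ⟨R, hR, hRD⟩ := hAP 1 one_pos
  obtain ⟨B, hB0, hB⟩ := bound_window R hR
  obtain ⟨W, hW⟩ := exists_nat_gt ((B + 2)^2)
  set x₀ : ℝ := -(2:ℝ)^(W+1) - hh (2^(W+1)) with hx₀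
  obtain ⟨τ, hτS, hτd⟩ := hRD (-x₀)
  simp only [Set.mem_setOf_eq] at hτS
  have hdist : |x₀ + τ| ≤ R := by
    have : dist τ (-x₀) = |τ + x₀| := by rw [Real.dist_eq]; ring_nf
    rw [this] at hτd
    rw [show |x₀ + τ| = |τ + x₀| by ring_nf]
    linarith
  set f : ℝ → ℝ := fun x => ∑' i : Idx, (pm i : ℝ) * phi0 (x + pa i) with hf
  have hfG : ∀ x : ℝ, f x = ∑' n : ℤ, G phi0 x n := fun x => lemmaA phi0_tsupport x
  -- upper bound on f x₀
  have hup : |f x₀| < B + 1 := by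
    have h1 : |f (x₀ + τ) - f x₀| < 1 := hτS x₀
    have h2 : |f (x₀ + τ)| ≤ B := by
      rw [hfG]
      exact hB _ hdist
    calc |f x₀| ≤ |f (x₀ + τ)| + |f (x₀ + τ) - f x₀| := by
          have := abs_sub_abs_le_abs_sub (f x₀) (f (x₀ + τ))
          rw [abs_sub_comm] at this
          linarith [abs_sub_abs_le_abs_sub (f x₀) (f (x₀ + τ)), abs_nonneg (f (x₀+τ))]
      _ < B + 1 := by linarith
  -- lower bound on f x₀
  have hlow : B + 1 < f x₀ := by
    have h1 := big_value W
    rw [← hfG] at h1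
    set s : ℝ := Real.sqrt ((W:ℝ) + 2) with hs
    have hs2 : s^2 = (W:ℝ) + 2 := Real.sq_sqrt (by positivity)
    have hs1 : (1:ℝ) ≤ s := by
      rw [hs, show (1:ℝ) = Real.sqrt 1 by simp]
      exact Real.sqrt_le_sqrt (by push_cast; linarith)
    have hs0 : (0:ℝ) < s := by linarith
    have hlb : s - 1 ≤ ((W:ℝ) + 1) / s := by
      rw [le_div_iff₀ hs0]
      nlinarith
    have hsB : B + 2 < s := by
      have : Real.sqrt ((B+2)^2) < s := by
        rw [hs]
        exact Real.sqrt_lt_sqrt (by positivity) (by push_cast; linarith)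
      rwa [Real.sqrt_sq (by linarith)] at this
    calc B + 1 < s - 1 := by linarith
      _ ≤ ((W:ℝ) + 1) / s := hlb
      _ ≤ f x₀ := h1
  have : f x₀ ≤ |f x₀| := le_abs_self _
  linarith

end S15

/-- there is a signed multiple discrete set in ℝ (points `a i` with nonzero
integer multiplicities `m i`) whose associated measure is almost periodic in the sense of
distributions but not in the weak sense. -/
theorem statement15 :
    ∃ (ι : Type) (a : ι → ℝ) (m : ι → ℤ),
      Function.Injective a ∧ (∀ i, m i ≠ 0) ∧
      (∀ K : Set ℝ, IsCompact K → (a ⁻¹' K).Finite) ∧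
      (∀ φ : ℝ → ℝ, ContDiff ℝ (⊤ : ℕ∞) φ → HasCompactSupport φ →
        AlmostPeriodic fun x => ∑' i, (m i : ℝ) * φ (x + a i)) ∧
      ¬ (∀ φ : ℝ → ℝ, Continuous φ → HasCompactSupport φ →
        AlmostPeriodic fun x => ∑' i, (m i : ℝ) * φ (x + a i)) := by
  refine ⟨S15.Idx, S15.pa, S15.pm, S15.pa_injective, S15.pm_ne_zero, S15.finite_preimage, ?_, ?_⟩
  · intro φ hφ hc
    exact S15.smooth_AP φ hφ hc
  · intro hAll
    exact S15.not_weak (hAll S15.phi0 S15.phi0_continuous S15.phi0_compact_support)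
end

section
/- Let A be a signed almost periodic multiple discrete set in ℝ^p such that inf{|x − y| : x ∈ s(A^+), y ∈ s(A^−)} > 0. Then A^+ and A^− are (positive) almost periodic multiple discrete sets. -/
/-!
If the support of a nonnegative test function `ψ` has diameter less than `d`, then at every point
`ψ (x + ·)` sees masses of only one sign, so convolving the positive part `A⁺` with `ψ` gives
`max (μ_A * ψ) 0`, a Lipschitz image of an almost periodic function. A general test function `φ`
is uniformly approximated by finite combinations `∑ φ g * ψ (· - g)` of translates of a single
such bump (a tent partition of unity on a fine grid), and translates of one function share their
almost periods. The approximation error is controlled because the mass of `|A|` in any ball of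
radius `d / 4` is uniformly bounded: by sign separation again it is at most `|μ_A * ψ₀|` for a bump
`ψ₀` equal to one on that ball, and a continuous almost periodic function is bounded.
-/

open Metric Set MeasureTheory Classical

open Filter Topology Function
open scoped NNReal

theorem mul_div_add_one_lt {a ε : ℝ} (ha : 0 ≤ a) (hε : 0 < ε) : a * (ε / (a + 1)) < ε := by
  rw [mul_div_assoc', div_lt_iff₀ (by linarith)]
  nlinarith

section AlmostPeriodic

variable {E : Type*} [SeminormedAddCommGroup E]

theorem RelativelyDense.mono {S T : Set E} (h : RelativelyDense S) (hST : S ⊆ T) :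
    RelativelyDense T := by
  obtain ⟨R, hR, hS⟩ := h
  exact ⟨R, hR, fun c => (hS c).imp fun τ ⟨hτ, hτc⟩ => ⟨hST hτ, hτc⟩⟩

theorem AlmostPeriodic.of_uniform_approx {f : E → ℝ}
    (h : ∀ ε > 0, ∃ g, AlmostPeriodic g ∧ ∀ x, |f x - g x| ≤ ε) : AlmostPeriodic f := by
  intro ε hε
  obtain ⟨g, hg, hfg⟩ := h (ε / 4) (by positivity)
  refine (hg (ε / 4) (by positivity)).mono fun τ hτ x => ?_
  have h₁ := abs_le.1 (hfg (x + τ))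
  have h₂ := abs_le.1 (hfg x)
  have h₃ := abs_lt.1 (hτ x)
  rw [abs_lt]
  constructor <;> linarith

theorem AlmostPeriodic.comp_lipschitzWith {f : E → ℝ} {g : ℝ → ℝ} {K : ℝ≥0}
    (hf : AlmostPeriodic f) (hg : LipschitzWith K g) : AlmostPeriodic (g ∘ f) := by
  intro ε hε
  refine (hf (ε / (K + 1)) (by positivity)).mono fun τ hτ x => ?_
  calc |g (f (x + τ)) - g (f x)| ≤ K * |f (x + τ) - f x| := by
        simpa only [Real.dist_eq] using hg.dist_le_mul (f (x + τ)) (f x)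
    _ ≤ K * (ε / (K + 1)) := by gcongr; exact (hτ x).le
    _ < ε := mul_div_add_one_lt K.2 hε

theorem AlmostPeriodic.sum_mul_comp_sub {f : E → ℝ} (hf : AlmostPeriodic f) (s : Finset E)
    (w : E → ℝ) : AlmostPeriodic fun x => ∑ g ∈ s, w g * f (x - g) := by
  intro ε hε
  have hW : 0 ≤ ∑ g ∈ s, |w g| := Finset.sum_nonneg fun g _ => abs_nonneg _
  refine (hf (ε / (∑ g ∈ s, |w g| + 1)) (by positivity)).mono fun τ hτ x => ?_
  calc |∑ g ∈ s, w g * f (x + τ - g) - ∑ g ∈ s, w g * f (x - g)|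
      ≤ ∑ g ∈ s, |w g| * (ε / (∑ g ∈ s, |w g| + 1)) := by
        rw [← Finset.sum_sub_distrib]
        refine (Finset.abs_sum_le_sum_abs _ _).trans (Finset.sum_le_sum fun g _ => ?_)
        rw [← mul_sub, abs_mul, ← sub_add_eq_add_sub]
        exact mul_le_mul_of_nonneg_left (hτ (x - g)).le (abs_nonneg _)
    _ = (∑ g ∈ s, |w g|) * (ε / (∑ g ∈ s, |w g| + 1)) := (Finset.sum_mul _ _ _).symm
    _ < ε := mul_div_add_one_lt hW hε

theorem AlmostPeriodic.exists_abs_le [ProperSpace E] {f : E → ℝ} (hf : AlmostPeriodic f)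
    (hc : Continuous f) : ∃ M, ∀ x, |f x| ≤ M := by
  obtain ⟨R, -, hR⟩ := hf 1 one_pos
  obtain ⟨M, hM⟩ := (isCompact_closedBall (0 : E) R).exists_bound_of_continuousOn hc.continuousOn
  refine ⟨M + 1, fun x => ?_⟩
  obtain ⟨τ, hτ, hτx⟩ := hR (-x)
  have hxτ : x + τ ∈ closedBall (0 : E) R := by
    rw [mem_closedBall_zero_iff, add_comm, ← sub_neg_eq_add, ← dist_eq_norm]
    exact hτx.le
  have h₁ := hM _ hxτ
  have h₂ := hτ x
  have h₃ := abs_sub_abs_le_abs_sub (f x) (f (x + τ))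
  rw [Real.norm_eq_abs] at h₁
  rw [abs_sub_comm] at h₃
  linarith

end AlmostPeriodic

section DiscreteConv

variable {E ι : Type*} [NormedAddCommGroup E] {a : ι → E} {c : ι → ℝ} {ψ : E → ℝ}

noncomputable def discreteConv (a : ι → E) (c : ι → ℝ) (ψ : E → ℝ) (x : E) : ℝ :=
  ∑' i, c i * ψ (x + a i)

theorem finite_setOf_exists_add_mem
    (hdisc : ∀ K : Set E, IsCompact K → (a ⁻¹' K).Finite) {K L : Set E} (hK : IsCompact K)
    (hL : IsCompact L) : {i | ∃ y ∈ L, y + a i ∈ K}.Finite := by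
  refine (hdisc _ (hK.add hL.neg)).subset fun i ⟨y, hy, hyK⟩ => ?_
  rw [mem_preimage, show a i = (y + a i) + -y by abel]
  exact add_mem_add hyK (neg_mem_neg.2 hy)

theorem discreteConv_eq_sum {s : Finset ι} {y : E} (h : ∀ i ∉ s, ψ (y + a i) = 0) :
    discreteConv a c ψ y = ∑ i ∈ s, c i * ψ (y + a i) :=
  tsum_eq_sum fun i hi => by rw [h i hi, mul_zero]

theorem summable_mul_apply_add (hdisc : ∀ K : Set E, IsCompact K → (a ⁻¹' K).Finite)
    (hψ : HasCompactSupport ψ) (c : ι → ℝ) (y : E) : Summable fun i => c i * ψ (y + a i) := by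
  refine summable_of_hasFiniteSupport
    ((finite_setOf_exists_add_mem hdisc hψ (isCompact_singleton (x := y))).subset fun i hi => ?_)
  refine ⟨y, rfl, by_contra fun h => hi ?_⟩
  simp only [image_eq_zero_of_notMem_tsupport h, mul_zero]

theorem continuous_discreteConv [ProperSpace E]
    (hdisc : ∀ K : Set E, IsCompact K → (a ⁻¹' K).Finite) (hψ : Continuous ψ)
    (hψs : HasCompactSupport ψ) : Continuous (discreteConv a c ψ) := by
  refine continuous_iff_continuousAt.2 fun x₀ => ?_
  set s := (finite_setOf_exists_add_mem hdisc hψs (isCompact_closedBall x₀ 1)).toFinset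
  have hloc : discreteConv a c ψ =ᶠ[𝓝 x₀] fun y => ∑ i ∈ s, c i * ψ (y + a i) :=
    eventuallyEq_of_mem (closedBall_mem_nhds x₀ one_pos) fun y hy =>
      discreteConv_eq_sum fun i hi =>
        image_eq_zero_of_notMem_tsupport fun h => hi ((Finite.mem_toFinset _).2 ⟨y, hy, h⟩)
  refine ContinuousAt.congr ?_ hloc.symm
  exact (continuous_finsetSum s fun i _ =>
    continuous_const.mul (hψ.comp (continuous_add_const (a i)))).continuousAt

theorem discreteConv_neg : discreteConv a (fun i => -c i) ψ = -discreteConv a c ψ := by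
  funext x
  simp only [discreteConv, Pi.neg_apply, neg_mul, tsum_neg]

theorem discreteConv_sum_mul_comp_sub (hdisc : ∀ K : Set E, IsCompact K → (a ⁻¹' K).Finite)
    (hψs : HasCompactSupport ψ) (s : Finset E) (w : E → ℝ) :
    discreteConv a c (fun z => ∑ g ∈ s, w g * ψ (z - g)) =
      fun x => ∑ g ∈ s, w g * discreteConv a c ψ (x - g) := by
  funext x
  simp only [discreteConv, ← tsum_mul_left]
  rw [← Summable.tsum_finsetSum fun g _ => (summable_mul_apply_add hdisc hψs c (x - g)).mul_left _]
  refine tsum_congr fun i => ?_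
  rw [Finset.mul_sum]
  refine Finset.sum_congr rfl fun g _ => ?_
  rw [sub_add_eq_add_sub]
  ring

theorem abs_discreteConv_sub_le (hdisc : ∀ K : Set E, IsCompact K → (a ⁻¹' K).Finite)
    {K : Set E} (hK : IsCompact K) {φ₁ φ₂ : E → ℝ} (h₁ : ∀ z ∉ K, φ₁ z = 0)
    (h₂ : ∀ z ∉ K, φ₂ z = 0) {ε N : ℝ} (hε : ∀ z, |φ₁ z - φ₂ z| ≤ ε) {x : E}
    (hN : ∀ t : Finset ι, (∀ i ∈ t, x + a i ∈ K) → ∑ i ∈ t, |c i| ≤ N) :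
    |discreteConv a c φ₁ x - discreteConv a c φ₂ x| ≤ N * ε := by
  set t := (finite_setOf_exists_add_mem hdisc hK (isCompact_singleton (x := x))).toFinset
  have ht : ∀ i, i ∈ t ↔ x + a i ∈ K := by simp [t]
  rw [discreteConv_eq_sum fun i hi => h₁ _ ((ht i).not.1 hi),
    discreteConv_eq_sum fun i hi => h₂ _ ((ht i).not.1 hi), ← Finset.sum_sub_distrib]
  calc |∑ i ∈ t, (c i * φ₁ (x + a i) - c i * φ₂ (x + a i))|
      ≤ ∑ i ∈ t, |c i| * ε := by
        refine (Finset.abs_sum_le_sum_abs _ _).trans (Finset.sum_le_sum fun i _ => ?_)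
        rw [← mul_sub, abs_mul]
        exact mul_le_mul_of_nonneg_left (hε _) (abs_nonneg _)
    _ = (∑ i ∈ t, |c i|) * ε := (Finset.sum_mul _ _ _).symm
    _ ≤ N * ε := mul_le_mul_of_nonneg_right (hN t fun i => (ht i).1) ((abs_nonneg _).trans (hε x))

end DiscreteConv

theorem tsum_abs_eq_abs_tsum {ι : Type*} {f : ι → ℝ} (h : (∀ i, 0 ≤ f i) ∨ ∀ i, f i ≤ 0) :
    ∑' i, |f i| = |∑' i, f i| := by
  rcases h with h | h
  · rw [abs_of_nonneg (tsum_nonneg h)]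
    exact tsum_congr fun i => abs_of_nonneg (h i)
  · rw [abs_of_nonpos (tsum_nonpos h), ← tsum_neg]
    exact tsum_congr fun i => abs_of_nonpos (h i)

theorem tsum_max_zero_eq_max_tsum {ι : Type*} {f : ι → ℝ} (h : (∀ i, 0 ≤ f i) ∨ ∀ i, f i ≤ 0) :
    ∑' i, max (f i) 0 = max (∑' i, f i) 0 := by
  rcases h with h | h
  · rw [max_eq_left (tsum_nonneg h)]
    exact tsum_congr fun i => max_eq_left (h i)
  · rw [max_eq_right (tsum_nonpos h)]
    exact (tsum_congr fun i => max_eq_right (h i)).trans tsum_zero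

section SignSeparation

variable {E ι : Type*} [NormedAddCommGroup E] {a : ι → E} {c : ι → ℝ} {ψ : E → ℝ} {d : ℝ}

theorem forall_mul_nonneg_or_forall_mul_nonpos
    (hsep : ∀ i j, 0 < c i → c j < 0 → d ≤ dist (a i) (a j)) (hψ0 : ∀ z, 0 ≤ ψ z)
    (hψd : support ψ ⊆ ball 0 (d / 2)) (x : E) :
    (∀ i, 0 ≤ c i * ψ (x + a i)) ∨ ∀ i, c i * ψ (x + a i) ≤ 0 := by
  by_contra! h
  obtain ⟨⟨i, hi⟩, j, hj⟩ := h
  have hci : c i < 0 := lt_of_not_ge fun h => hi.not_ge (mul_nonneg h (hψ0 _))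
  have hcj : 0 < c j := lt_of_not_ge fun h => hj.not_ge (mul_nonpos_of_nonpos_of_nonneg h (hψ0 _))
  have hxi := mem_ball_zero_iff.1 (hψd (right_ne_zero_of_mul hi.ne))
  have hxj := mem_ball_zero_iff.1 (hψd (right_ne_zero_of_mul hj.ne'))
  have := (hsep j i hcj hci).trans_eq (dist_add_left x (a j) (a i)).symm
  linarith [dist_le_norm_add_norm (x + a j) (x + a i)]

theorem discreteConv_abs_apply (hsep : ∀ i j, 0 < c i → c j < 0 → d ≤ dist (a i) (a j))
    (hψ0 : ∀ z, 0 ≤ ψ z) (hψd : support ψ ⊆ ball 0 (d / 2)) (x : E) :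
    discreteConv a (fun i => |c i|) ψ x = |discreteConv a c ψ x| := by
  rw [discreteConv, discreteConv,
    ← tsum_abs_eq_abs_tsum (forall_mul_nonneg_or_forall_mul_nonpos hsep hψ0 hψd x)]
  exact tsum_congr fun i => by rw [abs_mul, abs_of_nonneg (hψ0 _)]

theorem discreteConv_max_zero_apply (hsep : ∀ i j, 0 < c i → c j < 0 → d ≤ dist (a i) (a j))
    (hψ0 : ∀ z, 0 ≤ ψ z) (hψd : support ψ ⊆ ball 0 (d / 2)) (x : E) :
    discreteConv a (fun i => max (c i) 0) ψ x = max (discreteConv a c ψ x) 0 := by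
  rw [discreteConv, discreteConv,
    ← tsum_max_zero_eq_max_tsum (forall_mul_nonneg_or_forall_mul_nonpos hsep hψ0 hψd x)]
  exact tsum_congr fun i => by rw [max_mul_of_nonneg _ _ (hψ0 _), zero_mul]

theorem AlmostPeriodic.discreteConv_max_zero
    (hsep : ∀ i j, 0 < c i → c j < 0 → d ≤ dist (a i) (a j)) (hψ0 : ∀ z, 0 ≤ ψ z)
    (hψd : support ψ ⊆ ball 0 (d / 2)) (hap : AlmostPeriodic (discreteConv a c ψ)) :
    AlmostPeriodic (discreteConv a (fun i => max (c i) 0) ψ) := by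
  rw [show discreteConv a (fun i => max (c i) 0) ψ = (fun t => max t 0) ∘ discreteConv a c ψ from
    funext (discreteConv_max_zero_apply hsep hψ0 hψd)]
  exact hap.comp_lipschitzWith (LipschitzWith.id.max_const 0)

theorem exists_sum_abs_le_of_mem_closedBall [ProperSpace E]
    (hdisc : ∀ K : Set E, IsCompact K → (a ⁻¹' K).Finite)
    (hsep : ∀ i j, 0 < c i → c j < 0 → d ≤ dist (a i) (a j)) (hψ : Continuous ψ)
    (hψs : HasCompactSupport ψ) (hψ0 : ∀ z, 0 ≤ ψ z) (hψd : support ψ ⊆ ball 0 (d / 2))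
    {ρ : ℝ} (hψ1 : ∀ z ∈ closedBall (0 : E) ρ, ψ z = 1)
    (hap : AlmostPeriodic (discreteConv a c ψ)) :
    ∃ M, ∀ x (t : Finset ι), (∀ i ∈ t, x + a i ∈ closedBall 0 ρ) → ∑ i ∈ t, |c i| ≤ M := by
  obtain ⟨M, hM⟩ := hap.exists_abs_le (continuous_discreteConv hdisc hψ hψs)
  refine ⟨M, fun x t ht => ?_⟩
  calc ∑ i ∈ t, |c i| = ∑ i ∈ t, |c i| * ψ (x + a i) :=
        Finset.sum_congr rfl fun i hi => by rw [hψ1 _ (ht i hi), mul_one]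
    _ ≤ discreteConv a (fun i => |c i|) ψ x :=
        (summable_mul_apply_add hdisc hψs _ x).sum_le_tsum t fun i _ =>
          mul_nonneg (abs_nonneg _) (hψ0 _)
    _ = |discreteConv a c ψ x| := discreteConv_abs_apply hsep hψ0 hψd x
    _ ≤ M := hM x

end SignSeparation

theorem exists_sum_le_of_isCompact {E ι : Type*} [NormedAddCommGroup E] {a : ι → E}
    {w : ι → ℝ} (hw : ∀ i, 0 ≤ w i) {ρ M : ℝ} (hρ : 0 < ρ)
    (hM : ∀ x (t : Finset ι), (∀ i ∈ t, x + a i ∈ closedBall 0 ρ) → ∑ i ∈ t, w i ≤ M)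
    {K : Set E} (hK : IsCompact K) :
    ∃ N, ∀ x (t : Finset ι), (∀ i ∈ t, x + a i ∈ K) → ∑ i ∈ t, w i ≤ N := by
  obtain ⟨S, -, hS, hKS⟩ := hK.finite_cover_balls hρ
  refine ⟨hS.toFinset.card • M, fun x t ht => ?_⟩
  calc ∑ i ∈ t, w i
      ≤ ∑ i ∈ t, ∑ y ∈ hS.toFinset, if x + a i ∈ closedBall y ρ then w i else 0 := by
        refine Finset.sum_le_sum fun i hi => ?_
        obtain ⟨y, hy, hxy⟩ := mem_iUnion₂.1 (hKS (ht i hi))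
        refine le_of_eq_of_le (if_pos (ball_subset_closedBall hxy)).symm
          (Finset.single_le_sum (f := fun y => if x + a i ∈ closedBall y ρ then w i else 0)
            (fun y _ => ?_) (hS.mem_toFinset.2 hy))
        split_ifs
        exacts [hw i, le_rfl]
    _ = ∑ y ∈ hS.toFinset, ∑ i ∈ t with x + a i ∈ closedBall y ρ, w i := by
        rw [Finset.sum_comm]
        simp only [Finset.sum_filter]
    _ ≤ hS.toFinset.card • M :=
        Finset.sum_le_card_nsmul _ _ _ fun y _ => hM (x - y) _ fun i hi => by
          rw [mem_closedBall_zero_iff, sub_add_eq_add_sub, ← mem_closedBall_iff_norm]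
          exact (Finset.mem_filter.1 hi).2

theorem exists_sum_abs_le_of_isCompact {E ι : Type*} [NormedAddCommGroup E]
    [NormedSpace ℝ E] [HasContDiffBump E] [FiniteDimensional ℝ E] {a : ι → E} {c : ι → ℝ}
    (hdisc : ∀ K : Set E, IsCompact K → (a ⁻¹' K).Finite)
    (hap : ∀ φ : E → ℝ, Continuous φ → HasCompactSupport φ → AlmostPeriodic (discreteConv a c φ))
    {d : ℝ} (hd : 0 < d) (hsep : ∀ i j, 0 < c i → c j < 0 → d ≤ dist (a i) (a j))
    {K : Set E} (hK : IsCompact K) :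
    ∃ N, ∀ x (t : Finset ι), (∀ i ∈ t, x + a i ∈ K) → ∑ i ∈ t, |c i| ≤ N := by
  let ψ : ContDiffBump (0 : E) := ⟨d / 4, d / 2, by positivity, by linarith⟩
  obtain ⟨M, hM⟩ := exists_sum_abs_le_of_mem_closedBall hdisc hsep ψ.continuous
    ψ.hasCompactSupport (fun _ => ψ.nonneg) ψ.support_eq.subset
    (fun _ hz => ψ.one_of_mem_closedBall hz) (hap ψ ψ.continuous ψ.hasCompactSupport)
  exact exists_sum_le_of_isCompact (fun i => abs_nonneg (c i)) (by positivity) hM hK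

section Grid

noncomputable def tent (t : ℝ) : ℝ := max (1 - |t|) 0

theorem tent_nonneg (t : ℝ) : 0 ≤ tent t := le_max_right _ _

theorem continuous_tent : Continuous tent :=
  (continuous_const.sub continuous_abs).max continuous_const

theorem abs_lt_one_of_tent_ne_zero {t : ℝ} (h : tent t ≠ 0) : |t| < 1 := by
  by_contra! ht
  exact h (max_eq_right (by linarith))

theorem tent_sub_intCast_eq_zero {z : ℝ} {k : ℤ} (h₁ : k ≠ ⌊z⌋) (h₂ : k ≠ ⌊z⌋ + 1) :
    tent (z - k) = 0 := by
  have := Int.floor_le z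
  have := Int.lt_floor_add_one z
  apply max_eq_right
  rcases lt_or_gt_of_ne h₁ with h | h
  · have : (k : ℝ) + 1 ≤ ⌊z⌋ := by exact_mod_cast (show k + 1 ≤ ⌊z⌋ by omega)
    rw [abs_of_nonneg (by linarith)]
    linarith
  · have : (⌊z⌋ : ℝ) + 2 ≤ k := by exact_mod_cast (show ⌊z⌋ + 2 ≤ k by omega)
    rw [abs_of_nonpos (by linarith)]
    linarith

theorem tent_sub_floor_add_tent_sub_floor_add_one (z : ℝ) :
    tent (z - ⌊z⌋) + tent (z - ↑(⌊z⌋ + 1)) = 1 := by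
  have := Int.floor_le z
  have := Int.lt_floor_add_one z
  push_cast
  rw [tent, tent, abs_of_nonneg (by linarith), abs_of_nonpos (by linarith),
    max_eq_left (by linarith), max_eq_left (by linarith)]
  ring

theorem sum_tent_sub_intCast_eq_one {B : Finset ℤ} {z : ℝ} (h₁ : ⌊z⌋ ∈ B) (h₂ : ⌊z⌋ + 1 ∈ B) :
    ∑ k ∈ B, tent (z - k) = 1 := by
  rw [← Finset.sum_subset (s₁ := {⌊z⌋, ⌊z⌋ + 1}) (by simp [Finset.insert_subset_iff, h₁, h₂])
    fun k _ hk => tent_sub_intCast_eq_zero (by simp_all) (by simp_all),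
    Finset.sum_pair (by omega), tent_sub_floor_add_tent_sub_floor_add_one]

theorem sum_tent_sub_intCast_le_one (B : Finset ℤ) (z : ℝ) : ∑ k ∈ B, tent (z - k) ≤ 1 :=
  (Finset.sum_le_sum_of_subset_of_nonneg (Finset.subset_union_left (s₂ := {⌊z⌋, ⌊z⌋ + 1}))
    fun _ _ _ => tent_nonneg _).trans_eq (sum_tent_sub_intCast_eq_one (by simp) (by simp))

theorem floor_mem_Icc_of_abs_le {x : ℝ} {n : ℤ} (h : |x| ≤ n) :
    ⌊x⌋ ∈ Finset.Icc (-(n + 1)) (n + 1) ∧ ⌊x⌋ + 1 ∈ Finset.Icc (-(n + 1)) (n + 1) := by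
  obtain ⟨h₁, h₂⟩ := abs_le.1 h
  have hl : -n ≤ ⌊x⌋ := Int.le_floor.2 (by push_cast; linarith)
  have hu : ⌊x⌋ ≤ n := Int.floor_le_iff.2 (by linarith)
  simp only [Finset.mem_Icc]
  omega

variable {p : ℕ}

theorem EuclideanSpace.norm_le_mul_sqrt {z : EuclideanSpace ℝ (Fin p)} {C : ℝ} (hC : 0 ≤ C)
    (h : ∀ j, |z j| ≤ C) : ‖z‖ ≤ C * √p :=
  calc ‖z‖ = √(∑ j, ‖z j‖ ^ 2) := EuclideanSpace.norm_eq z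
    _ ≤ √(∑ _j : Fin p, C ^ 2) := by
        gcongr with j
        exact Real.norm_eq_abs _ ▸ h j
    _ = C * √p := by
        rw [Finset.sum_const, Finset.card_univ, Fintype.card_fin, nsmul_eq_mul,
          Real.sqrt_mul (Nat.cast_nonneg p), Real.sqrt_sq hC, mul_comm]

/-- The translates `gridBump r (· - gridPoint r k)`, `k ∈ ℤ^p`, form a partition of unity. -/
noncomputable def gridBump (r : ℝ) (z : EuclideanSpace ℝ (Fin p)) : ℝ := ∏ j, tent (z j / r)

noncomputable def gridPoint (r : ℝ) (k : Fin p → ℤ) : EuclideanSpace ℝ (Fin p) :=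
  WithLp.toLp 2 fun j => r * k j

theorem gridBump_nonneg (r : ℝ) (z : EuclideanSpace ℝ (Fin p)) : 0 ≤ gridBump r z :=
  Finset.prod_nonneg fun _ _ => tent_nonneg _

theorem continuous_gridBump (r : ℝ) : Continuous (gridBump (p := p) r) :=
  continuous_finsetProd _ fun j _ =>
    continuous_tent.comp ((PiLp.continuous_apply 2 (fun _ : Fin p => ℝ) j).div_const r)

theorem norm_le_of_gridBump_ne_zero {r : ℝ} (hr : 0 < r) {z : EuclideanSpace ℝ (Fin p)}
    (h : gridBump r z ≠ 0) : ‖z‖ ≤ r * √p := by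
  refine EuclideanSpace.norm_le_mul_sqrt hr.le fun j => ?_
  have := abs_lt_one_of_tent_ne_zero (Finset.prod_ne_zero_iff.1 h j (Finset.mem_univ j))
  rw [abs_div, abs_of_pos hr, div_lt_one hr] at this
  exact this.le

theorem gridPoint_injective {r : ℝ} (hr : r ≠ 0) : Injective (gridPoint (p := p) r) := by
  intro k l h
  funext j
  have := congr_arg (fun z : EuclideanSpace ℝ (Fin p) => z j) h
  simpa [gridPoint, hr] using this

theorem sum_gridBump_sub_gridPoint {r : ℝ} (hr : r ≠ 0) (I : Finset ℤ)
    (z : EuclideanSpace ℝ (Fin p)) :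
    ∑ k ∈ Fintype.piFinset fun _ => I, gridBump r (z - gridPoint r k) =
      ∏ j, ∑ k ∈ I, tent (z j / r - k) := by
  rw [Finset.prod_univ_sum]
  refine Finset.sum_congr rfl fun k _ => Finset.prod_congr rfl fun j _ => ?_
  simp only [gridPoint, PiLp.sub_apply]
  congr 1
  field_simp

theorem abs_sub_sum_gridBump_le {φ : EuclideanSpace ℝ (Fin p) → ℝ} {r ε : ℝ} (hr : 0 < r)
    {n : ℤ} (hn : ∀ z, φ z ≠ 0 → ∀ j, |z j / r| ≤ n)
    (hφ : ∀ z w, ‖z - w‖ ≤ r * √p → |φ z - φ w| ≤ ε) (z : EuclideanSpace ℝ (Fin p)) :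
    |φ z - ∑ k ∈ Fintype.piFinset (fun _ => Finset.Icc (-(n + 1)) (n + 1)),
        φ (gridPoint r k) * gridBump r (z - gridPoint r k)| ≤ ε := by
  set B := Fintype.piFinset fun _ : Fin p => Finset.Icc (-(n + 1)) (n + 1)
  have hε : 0 ≤ ε := (abs_nonneg _).trans (hφ z z (by simp; positivity))
  have hS : ∑ k ∈ B, gridBump r (z - gridPoint r k) ≤ 1 := by
    rw [sum_gridBump_sub_gridPoint hr.ne']
    exact Finset.prod_le_one (fun j _ => Finset.sum_nonneg fun _ _ => tent_nonneg _)
      fun j _ => sum_tent_sub_intCast_le_one _ _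
  -- on the support of `φ` the translates of the bump sum to one
  have hφS : φ z * ∑ k ∈ B, gridBump r (z - gridPoint r k) = φ z := by
    by_cases h : φ z = 0
    · rw [h, zero_mul]
    rw [sum_gridBump_sub_gridPoint hr.ne', Finset.prod_eq_one fun j _ =>
      sum_tent_sub_intCast_eq_one (floor_mem_Icc_of_abs_le (hn z h j)).1
        (floor_mem_Icc_of_abs_le (hn z h j)).2, mul_one]
  have hterm : ∀ k, |φ z - φ (gridPoint r k)| * gridBump r (z - gridPoint r k) ≤
      ε * gridBump r (z - gridPoint r k) := fun k => by
    by_cases hk : gridBump r (z - gridPoint r k) = 0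
    · rw [hk, mul_zero, mul_zero]
    exact mul_le_mul_of_nonneg_right (hφ _ _ (norm_le_of_gridBump_ne_zero hr hk))
      (gridBump_nonneg _ _)
  calc |φ z - ∑ k ∈ B, φ (gridPoint r k) * gridBump r (z - gridPoint r k)|
      = |∑ k ∈ B, (φ z - φ (gridPoint r k)) * gridBump r (z - gridPoint r k)| := by
        simp only [sub_mul, Finset.sum_sub_distrib, ← Finset.mul_sum, hφS]
    _ ≤ ∑ k ∈ B, |φ z - φ (gridPoint r k)| * gridBump r (z - gridPoint r k) := by
        refine (Finset.abs_sum_le_sum_abs _ _).trans_eq (Finset.sum_congr rfl fun k _ => ?_)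
        rw [abs_mul, abs_of_nonneg (gridBump_nonneg _ _)]
    _ ≤ ε * ∑ k ∈ B, gridBump r (z - gridPoint r k) := by
        rw [Finset.mul_sum]
        exact Finset.sum_le_sum fun k _ => hterm k
    _ ≤ ε := mul_le_of_le_one_right hε hS

theorem exists_bump_sum_translate_approx {φ : EuclideanSpace ℝ (Fin p) → ℝ} (hφ : Continuous φ)
    (hφs : HasCompactSupport φ) {ε ρ : ℝ} (hε : 0 < ε) (hρ : 0 < ρ) :
    ∃ ψ : EuclideanSpace ℝ (Fin p) → ℝ, Continuous ψ ∧ HasCompactSupport ψ ∧ (∀ z, 0 ≤ ψ z) ∧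
      support ψ ⊆ ball 0 ρ ∧
      ∃ s : Finset (EuclideanSpace ℝ (Fin p)), ∀ z, |φ z - ∑ g ∈ s, φ g * ψ (z - g)| ≤ ε := by
  obtain ⟨δ, hδ, hφδ⟩ :=
    Metric.uniformContinuous_iff.1 (hφs.uniformContinuous_of_continuous hφ) ε hε
  obtain ⟨C, hC⟩ := hφs.isBounded.subset_closedBall 0
  set r := min δ ρ / (2 * (√p + 1))
  have hmin : 0 < min δ ρ := lt_min hδ hρ
  have hr : 0 < r := by positivity
  have hrp : r * √p < min δ ρ := by
    have : r * (2 * (√p + 1)) = min δ ρ := div_mul_cancel₀ _ (by positivity)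
    nlinarith [Real.sqrt_nonneg p]
  have hsupp : ∀ z, gridBump r z ≠ 0 → ‖z‖ < min δ ρ := fun z hz =>
    (norm_le_of_gridBump_ne_zero hr hz).trans_lt hrp
  have hn : ∀ z, φ z ≠ 0 → ∀ j, |z j / r| ≤ ⌈C / r⌉ := fun z hz j => by
    have hzC := mem_closedBall_zero_iff.1 (hC (subset_tsupport φ hz))
    rw [abs_div, abs_of_pos hr]
    refine (div_le_div_of_nonneg_right ?_ hr.le).trans (Int.le_ceil _)
    exact (by simpa using PiLp.norm_apply_le z j : |z j| ≤ ‖z‖).trans hzC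
  refine ⟨gridBump r, continuous_gridBump r, ?_, gridBump_nonneg r,
    fun z hz => mem_ball_zero_iff.2 ((hsupp z hz).trans_le (min_le_right _ _)),
    (Fintype.piFinset fun _ => Finset.Icc (-(⌈C / r⌉ + 1)) (⌈C / r⌉ + 1)).image (gridPoint r),
    fun z => ?_⟩
  · exact HasCompactSupport.intro (isCompact_closedBall 0 (min δ ρ)) fun z hz =>
      by_contra fun h => hz (mem_closedBall_zero_iff.2 (hsupp z h).le)
  rw [Finset.sum_image (gridPoint_injective hr.ne').injOn]
  refine abs_sub_sum_gridBump_le hr hn (fun z w hzw => ?_) z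
  rw [← Real.dist_eq]
  exact (hφδ ((dist_eq_norm z w).trans_le hzw |>.trans_lt hrp |>.trans_le (min_le_left _ _))).le

end Grid

theorem almostPeriodic_discreteConv_max_zero {p : ℕ} {ι : Type*}
    {a : ι → EuclideanSpace ℝ (Fin p)} {c : ι → ℝ}
    (hdisc : ∀ K : Set (EuclideanSpace ℝ (Fin p)), IsCompact K → (a ⁻¹' K).Finite)
    (hap : ∀ φ : EuclideanSpace ℝ (Fin p) → ℝ, Continuous φ → HasCompactSupport φ →
      AlmostPeriodic (discreteConv a c φ))
    {d : ℝ} (hd : 0 < d) (hsep : ∀ i j, 0 < c i → c j < 0 → d ≤ dist (a i) (a j))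
    {φ : EuclideanSpace ℝ (Fin p) → ℝ} (hφ : Continuous φ) (hφs : HasCompactSupport φ) :
    AlmostPeriodic (discreteConv a (fun i => max (c i) 0) φ) := by
  set K := cthickening (d / 2) (tsupport φ)
  have hK : IsCompact K := hφs.isCompact.cthickening
  obtain ⟨N, hN⟩ := exists_sum_abs_le_of_isCompact hdisc hap hd hsep hK
  have hN0 : 0 ≤ N := by simpa using hN 0 ∅
  refine AlmostPeriodic.of_uniform_approx fun ε hε => ?_
  obtain ⟨ψ, hψ, hψs, hψ0, hψd, s, happrox⟩ :=
    exists_bump_sum_translate_approx hφ hφs (ε := ε / (N + 1)) (by positivity) (half_pos hd)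
  refine ⟨discreteConv a (fun i => max (c i) 0) fun z => ∑ g ∈ s, φ g * ψ (z - g), ?_,
    fun x => ?_⟩
  · rw [discreteConv_sum_mul_comp_sub hdisc hψs]
    exact ((hap ψ hψ hψs).discreteConv_max_zero hsep hψ0 hψd).sum_mul_comp_sub s φ
  have hφK : ∀ z ∉ K, φ z = 0 := fun z hz =>
    image_eq_zero_of_notMem_tsupport fun h => hz (self_subset_cthickening _ h)
  have hφtK : ∀ z ∉ K, ∑ g ∈ s, φ g * ψ (z - g) = 0 := fun z hz =>
    Finset.sum_eq_zero fun g _ => by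
      by_contra h
      obtain ⟨hg, hzg⟩ := mul_ne_zero_iff.1 h
      refine hz (mem_cthickening_of_dist_le z g _ _ (subset_tsupport φ hg) ?_)
      exact (dist_eq_norm z g).trans_le (mem_ball_zero_iff.1 (hψd hzg)).le
  have hNx : ∀ t : Finset ι, (∀ i ∈ t, x + a i ∈ K) → ∑ i ∈ t, |max (c i) 0| ≤ N :=
    fun t ht => (Finset.sum_le_sum fun i _ => (abs_of_nonneg (le_max_right _ _)).trans_le
      (max_le (le_abs_self _) (abs_nonneg _))).trans (hN x t ht)
  exact (abs_discreteConv_sub_le hdisc hK hφK hφtK happrox hNx).trans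
    (mul_div_add_one_lt hN0 hε).le

theorem ite_pos_intCast_eq_max (n : ℤ) : (if 0 < n then (n : ℝ) else 0) = max (n : ℝ) 0 := by
  split_ifs with h
  · exact (max_eq_left (by exact_mod_cast h.le)).symm
  · exact (max_eq_right (by exact_mod_cast not_lt.1 h)).symm

theorem ite_neg_intCast_eq_max (n : ℤ) : (if n < 0 then -(n : ℝ) else 0) = max (-(n : ℝ)) 0 := by
  split_ifs with h
  · exact (max_eq_left (neg_nonneg.2 (by exact_mod_cast h.le))).symm
  · exact (max_eq_right (neg_nonpos.2 (by exact_mod_cast not_lt.1 h))).symm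

theorem statement16_general {p : ℕ} {ι : Type*} (a : ι → EuclideanSpace ℝ (Fin p)) (m : ι → ℤ)
    (hdisc : ∀ K : Set (EuclideanSpace ℝ (Fin p)), IsCompact K → (a ⁻¹' K).Finite)
    (hap : ∀ φ : EuclideanSpace ℝ (Fin p) → ℝ, Continuous φ → HasCompactSupport φ →
      AlmostPeriodic fun x => ∑' i, (m i : ℝ) * φ (x + a i))
    (d : ℝ) (hd : 0 < d)
    (hsep : ∀ i j, 0 < m i → m j < 0 → d ≤ dist (a i) (a j)) :
    (∀ φ : EuclideanSpace ℝ (Fin p) → ℝ, Continuous φ → HasCompactSupport φ →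
      AlmostPeriodic fun x => ∑' i, (if 0 < m i then (m i : ℝ) else 0) * φ (x + a i)) ∧
    ∀ φ : EuclideanSpace ℝ (Fin p) → ℝ, Continuous φ → HasCompactSupport φ →
      AlmostPeriodic fun x => ∑' i, (if m i < 0 then -(m i : ℝ) else 0) * φ (x + a i) := by
  have hap_neg : ∀ φ : EuclideanSpace ℝ (Fin p) → ℝ, Continuous φ → HasCompactSupport φ →
      AlmostPeriodic (discreteConv a (fun i => -(m i : ℝ)) φ) := fun φ hφ hφs => by
    rw [discreteConv_neg]
    exact (hap φ hφ hφs).comp_lipschitzWith LipschitzWith.id.neg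
  refine ⟨fun φ hφ hφs => ?_, fun φ hφ hφs => ?_⟩
  · change AlmostPeriodic (discreteConv a _ φ)
    simp only [ite_pos_intCast_eq_max]
    exact almostPeriodic_discreteConv_max_zero (c := fun i => (m i : ℝ)) hdisc hap hd
      (fun i j hi hj => hsep i j (Int.cast_pos.1 hi) (Int.cast_lt_zero.1 hj)) hφ hφs
  · change AlmostPeriodic (discreteConv a _ φ)
    simp only [ite_neg_intCast_eq_max]
    exact almostPeriodic_discreteConv_max_zero hdisc hap_neg hd
      (fun i j hi hj => (hsep j i (by simpa using hj) (by simpa using hi)).trans_eq (dist_comm _ _))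
      hφ hφs

/-- if the positive and negative parts of a signed almost periodic multiple
discrete set are at positive distance from each other, then both parts are (positive)
almost periodic multiple discrete sets. -/
theorem statement16 {p : ℕ} {ι : Type*} (a : ι → EuclideanSpace ℝ (Fin p)) (m : ι → ℤ)
    (ha : Function.Injective a) (hm : ∀ i, m i ≠ 0)
    (hdisc : ∀ K : Set (EuclideanSpace ℝ (Fin p)), IsCompact K → (a ⁻¹' K).Finite)
    (hap : ∀ φ : EuclideanSpace ℝ (Fin p) → ℝ, Continuous φ → HasCompactSupport φ →
      AlmostPeriodic fun x => ∑' i, (m i : ℝ) * φ (x + a i))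
    (d : ℝ) (hd : 0 < d)
    (hsep : ∀ i j, 0 < m i → m j < 0 → d ≤ dist (a i) (a j)) :
    (∀ φ : EuclideanSpace ℝ (Fin p) → ℝ, Continuous φ → HasCompactSupport φ →
      AlmostPeriodic fun x => ∑' i, (if 0 < m i then (m i : ℝ) else 0) * φ (x + a i)) ∧
    ∀ φ : EuclideanSpace ℝ (Fin p) → ℝ, Continuous φ → HasCompactSupport φ →
      AlmostPeriodic fun x => ∑' i, (if m i < 0 then -(m i : ℝ) else 0) * φ (x + a i) :=
  statement16_general a m hdisc hap d hd hsep
end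

section
/- Let a_n^+ = n + 1/(α(n)+1)^2 for even nonzero n, with α(n) the 2-adic valuation of n, and A^+ = {a_n^+ : n ∈ 2ℤ\{0}}. Then for ε < 1/4, the set A^+ has no ε-almost periods τ with |τ| > 1 in the bijective sense; consequently A^+ is not an almost periodic discrete set. -/
open Metric Set MeasureTheory

/-- The index set: even nonzero integers. -/
def EvenNZ : Type := {n : ℤ // n ≠ 0 ∧ (2 : ℤ) ∣ n}

/-- `α(n)`: the 2-adic valuation of `n`. -/
noncomputable def alphaVal (n : EvenNZ) : ℕ := padicValInt 2 n.1

noncomputable def aplus (n : EvenNZ) : ℝ := (n.1 : ℝ) + 1 / ((alphaVal n : ℝ) + 1) ^ 2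

/-!
Write `a_n^+ = n + β_n` with `β_n ∈ (0, 1/4]`. If `|a_n^+ + τ - a_{σ n}^+| < ε ≤ 1/4`, then the
integer shift `σ n - n` lies within `1/2` of `τ` for every `n`, so it is a constant `m`, and
`|τ| ≥ 1/2` forces `m ≠ 0`. But `n ↦ n + m` does not map `2ℤ \ {0}` into itself: `m` must be even,
and then `-m` is sent to `0`. Relative density of the almost periods would supply such `τ`.
-/

theorem RelativelyDense.exists_lt_abs {S : Set ℝ} (hS : RelativelyDense S) (r : ℝ) :
    ∃ τ ∈ S, r < |τ| := by
  obtain ⟨R, -, hball⟩ := hS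
  obtain ⟨τ, hτ, hdist⟩ := hball (R + |r|)
  rw [Real.dist_eq, abs_lt] at hdist
  exact ⟨τ, hτ, lt_abs.mpr (Or.inl (by linarith [le_abs_self r]))⟩

theorem Int.eq_of_abs_sub_lt_half {a b : ℤ} {x : ℝ} (ha : |(a : ℝ) - x| < 1 / 2)
    (hb : |(b : ℝ) - x| < 1 / 2) : a = b := by
  have h : |((a - b : ℤ) : ℝ)| < 1 := by
    push_cast
    calc |(a : ℝ) - b| = |((a : ℝ) - x) - ((b : ℝ) - x)| := by ring_nf
      _ ≤ |(a : ℝ) - x| + |(b : ℝ) - x| := abs_sub _ _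
      _ < 1 := by linarith
  rw [← Int.cast_abs, ← Int.cast_one, Int.cast_lt, Int.abs_lt_one_iff] at h
  omega

namespace EvenNZ

lemma one_le_alphaVal (n : EvenNZ) : 1 ≤ alphaVal n := by
  obtain ⟨n, hn0, hdvd⟩ := n
  exact one_le_padicValNat_of_dvd (Int.natAbs_ne_zero.mpr hn0) (Int.natAbs_dvd_natAbs.mpr hdvd)

lemma aplus_sub_mem_Ioc (n : EvenNZ) : aplus n - n.1 ∈ Ioc (0 : ℝ) (1 / 4) := by
  have h : (1 : ℝ) ≤ alphaVal n := by exact_mod_cast one_le_alphaVal n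
  rw [aplus, add_sub_cancel_left]
  refine ⟨by positivity, ?_⟩
  rw [div_le_div_iff₀ (by positivity) (by norm_num)]
  nlinarith

lemma abs_shift_sub_lt_half {ε τ : ℝ} (hε : ε ≤ 1 / 4) {n k : EvenNZ}
    (h : |aplus n + τ - aplus k| < ε) : |((k.1 - n.1 : ℤ) : ℝ) - τ| < 1 / 2 := by
  obtain ⟨hn₀, hn₁⟩ := aplus_sub_mem_Ioc n
  obtain ⟨hk₀, hk₁⟩ := aplus_sub_mem_Ioc k
  rw [abs_lt] at h ⊢
  push_cast
  constructor <;> linarith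

lemma eq_zero_of_forall_add_mem {m : ℤ} (h : ∀ n : EvenNZ, ∃ k : EvenNZ, k.1 = n.1 + m) :
    m = 0 := by
  obtain ⟨k, hk⟩ := h ⟨2, by norm_num⟩
  have hm : (2 : ℤ) ∣ m := by
    have := dvd_sub k.2.2 (dvd_refl (2 : ℤ))
    rwa [hk, add_sub_cancel_left] at this
  by_contra hm0
  obtain ⟨k', hk'⟩ := h ⟨-m, neg_ne_zero.mpr hm0, dvd_neg.mpr hm⟩
  exact k'.2.1 (by simpa using hk')

theorem not_almostPeriod_aplus {ε τ : ℝ} (hε : ε ≤ 1 / 4) (hτ : 1 / 2 ≤ |τ|) :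
    ¬ ∃ σ : EvenNZ → EvenNZ, ∀ n, |aplus n + τ - aplus (σ n)| < ε := by
  rintro ⟨σ, hσ⟩
  have hshift n := abs_shift_sub_lt_half hε (hσ n)
  set n₀ : EvenNZ := ⟨2, by norm_num⟩
  have hconst n : (σ n).1 = n.1 + ((σ n₀).1 - n₀.1) := by
    have := Int.eq_of_abs_sub_lt_half (hshift n) (hshift n₀)
    omega
  have hm0 := eq_zero_of_forall_add_mem fun n => ⟨σ n, hconst n⟩
  have := hshift n₀
  rw [hm0, Int.cast_zero, zero_sub, abs_neg] at this
  linarith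

end EvenNZ

/-- for `ε < 1/4` the set `A⁺ = (a_n^+)` has no ε-almost periods `τ` with
`|τ| > 1` (in the bijective sense); consequently `A⁺` is not almost periodic. -/
theorem statement17 :
    (∀ ε : ℝ, 0 < ε → ε < 1 / 4 → ∀ τ : ℝ, 1 < |τ| →
      ¬ ∃ σ : EvenNZ ≃ EvenNZ, ∀ n : EvenNZ, |aplus n + τ - aplus (σ n)| < ε) ∧
    ¬ (∀ ε : ℝ, 0 < ε → RelativelyDense {τ : ℝ |
        ∃ σ : EvenNZ ≃ EvenNZ, ∀ n : EvenNZ, |aplus n + τ - aplus (σ n)| < ε}) := by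
  have hno_period : ∀ ε : ℝ, 0 < ε → ε < 1 / 4 → ∀ τ : ℝ, 1 < |τ| →
      ¬ ∃ σ : EvenNZ ≃ EvenNZ, ∀ n : EvenNZ, |aplus n + τ - aplus (σ n)| < ε :=
    fun ε _ hε τ hτ ⟨σ, hσ⟩ => EvenNZ.not_almostPeriod_aplus hε.le (by linarith) ⟨σ, hσ⟩
  refine ⟨hno_period, fun h => ?_⟩
  obtain ⟨τ, hτ, hτ_gt⟩ := (h (1 / 8) (by norm_num)).exists_lt_abs 1
  exact hno_period (1 / 8) (by norm_num) (by norm_num) τ hτ_gt hτ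
end
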